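/- arXiv:0810.0229 — 2 statements merged into one kernel-verified Lean document; each statement's English description precedes it below -/
import Mathlib

section
/- For every f ∈ F_π and every a ∈ 𝒪_M there exists a unique power series [a]_f ∈ 𝒪_M⟦X⟧ such that [a]_f ≡ aX mod degree 2 and [a]_f commutes with f under composition, i.e. [a]_f(f(X)) = f([a]_f(X)); moreover [a]_f is an endomorphism of the Lubin–Tate formal group law F_f, i.e. [a]_f(F_f(X,Y)) = F_f([a]_f(X),[a]_f(Y)). -/
/-- A finite extension `M` of `ℚ_p` is a `ℤ_p`-algebra via `ℚ_p`. -/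
noncomputable instance PadicExt.algebraPadicInt {p : ℕ} [Fact p.Prime] {M : Type*} [Field M]
    [Algebra ℚ_[p] M] : Algebra ℤ_[p] M :=
  ((algebraMap ℚ_[p] M).comp (algebraMap ℤ_[p] ℚ_[p])).toAlgebra

/-- Substitution of the one-variable power series `f` (with coefficients in `R`) by the
multivariate power series `a` (with coefficients in an `R`-algebra `S`); this gives the
usual composition `f(a)` whenever the constant coefficient of `a` vanishes. -/
noncomputable def PSsubst {R S : Type*} [CommRing R] [CommRing S] [Algebra R S] {σ : Type*}
    (a : MvPowerSeries σ S) (f : PowerSeries R) : MvPowerSeries σ S :=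
  fun d => ∑ n ∈ Finset.range (d.sum (fun _ m => m) + 1),
    algebraMap R S (PowerSeries.coeff n f) * MvPowerSeries.coeff d (a ^ n)

/-- Substitution of the two-variable power series `F` (with coefficients in `R`) by the pair
of multivariate power series `a`, `b`; this gives the usual composition `F(a,b)` whenever the
constant coefficients of `a` and `b` vanish. -/
noncomputable def MvSubst2 {R S : Type*} [CommRing R] [CommRing S] [Algebra R S] {σ : Type*}
    (a b : MvPowerSeries σ S) (F : MvPowerSeries (Fin 2) R) : MvPowerSeries σ S :=
  fun d => ∑ mn ∈ Finset.range (d.sum (fun _ m => m) + 1) ×ˢ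
      Finset.range (d.sum (fun _ m => m) + 1),
    algebraMap R S (MvPowerSeries.coeff (Finsupp.single 0 mn.1 + Finsupp.single 1 mn.2) F) *
      MvPowerSeries.coeff d (a ^ mn.1 * b ^ mn.2)

/-- `F ∈ R⟦X,Y⟧` is a one-dimensional commutative formal group law:
`F(X,Y) ≡ X + Y mod degree 2`, `F(X,F(Y,Z)) = F(F(X,Y),Z)` and `F(X,Y) = F(Y,X)`. -/
def IsFormalGroupLaw {R : Type*} [CommRing R] (F : MvPowerSeries (Fin 2) R) : Prop :=
  MvPowerSeries.constantCoeff F = 0 ∧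
  MvPowerSeries.coeff (Finsupp.single 0 1) F = 1 ∧
  MvPowerSeries.coeff (Finsupp.single 1 1) F = 1 ∧
  MvSubst2 (MvPowerSeries.X 0) (MvSubst2 (MvPowerSeries.X 1) (MvPowerSeries.X 2) F) F =
    MvSubst2 (MvSubst2 (MvPowerSeries.X 0 : MvPowerSeries (Fin 3) R) (MvPowerSeries.X 1) F)
      (MvPowerSeries.X 2) F ∧
  MvSubst2 (MvPowerSeries.X 1 : MvPowerSeries (Fin 2) R) (MvPowerSeries.X 0) F = F

/-- `h ∈ R⟦X⟧` (with `h(0) = 0`) is an endomorphism of the formal group law `F`: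
`h(F(X,Y)) = F(h(X),h(Y))`. -/
def IsEndoOf {R : Type*} [CommRing R] (f : PowerSeries R) (F : MvPowerSeries (Fin 2) R) : Prop :=
  PSsubst F f =
    MvSubst2 (PSsubst (MvPowerSeries.X 0) f) (PSsubst (MvPowerSeries.X 1) f) F

/-- `f` belongs to the Lubin-Tate set `F_π`: `f ≡ πX mod degree 2` and `f ≡ X^q mod 𝔪` where
`𝔪` is the maximal ideal. -/
def IsLubinTateSeries {R : Type*} [CommRing R] (𝔪 : Ideal R) (π : R) (q : ℕ)
    (f : PowerSeries R) : Prop :=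
  PowerSeries.constantCoeff f = 0 ∧ PowerSeries.coeff 1 f = π ∧
  ∀ n : ℕ, PowerSeries.coeff n f - PowerSeries.coeff (R := R) n (PowerSeries.X ^ q) ∈ 𝔪

/-- `h` satisfies the defining property of the Lubin-Tate endomorphism `[a]_f`:
`h ≡ aX mod degree 2` and `h(f(X)) = f(h(X))`. -/
def IsLTBracket {R : Type*} [CommRing R] (f : PowerSeries R) (a : R) (h : PowerSeries R) :
    Prop :=
  PowerSeries.constantCoeff h = 0 ∧ PowerSeries.coeff 1 h = a ∧
    PSsubst (f : MvPowerSeries Unit R) h = PSsubst (h : MvPowerSeries Unit R) f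

set_option linter.unusedRCasesPattern false

open MvPowerSeries Finset


namespace LT

variable {R : Type*} [CommRing R] {σ : Type*}

/-- total weight of a monomial exponent -/
def wt (d : σ →₀ ℕ) : ℕ := d.sum fun _ m => m

@[simp] lemma wt_zero : wt (0 : σ →₀ ℕ) = 0 := by simp [wt]

lemma wt_add (u v : σ →₀ ℕ) : wt (u + v) = wt u + wt v := by
  classical
  exact Finsupp.sum_add_index' (fun _ => rfl) (fun _ _ _ => rfl)

@[simp] lemma wt_single (i : σ) (n : ℕ) : wt (Finsupp.single i n) = n := by
  simp [wt, Finsupp.sum_single_index]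

lemma wt_eq_zero {d : σ →₀ ℕ} (h : wt d = 0) : d = 0 := by
  classical
  ext i
  by_contra hi
  have hmem : i ∈ d.support := Finsupp.mem_support_iff.2 (by simpa using hi)
  have h2 := Finset.single_le_sum (f := fun j => d j) (fun _ _ => Nat.zero_le _) hmem
  simp only [wt, Finsupp.sum] at h
  simp only [h, Nat.le_zero] at h2
  simp [h2] at hi

lemma apply_le_wt (d : σ →₀ ℕ) (i : σ) : d i ≤ wt d := by
  by_cases hi : d i = 0
  · omega
  · exact Finset.single_le_sum (f := fun j => d j) (fun _ _ => Nat.zero_le _)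
      (Finsupp.mem_support_iff.2 hi)

/-- order at least `m` -/
def OrdGE (A : MvPowerSeries σ R) (m : ℕ) : Prop := ∀ d, wt d < m → coeff d A = 0

lemma OrdGE.mul {A B : MvPowerSeries σ R} {m n : ℕ} (hA : OrdGE A m) (hB : OrdGE B n) :
    OrdGE (A * B) (m + n) := by
  classical
  intro d hd
  rw [coeff_mul]
  refine Finset.sum_eq_zero fun p hp => ?_
  rw [Finset.HasAntidiagonal.mem_antidiagonal] at hp
  have hw : wt p.1 + wt p.2 = wt d := by rw [← wt_add, hp]
  by_cases h1 : wt p.1 < m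
  · rw [hA _ h1, zero_mul]
  · rw [hB _ (by omega), mul_zero]

lemma OrdGE_one_iff {A : MvPowerSeries σ R} :
    OrdGE A 1 ↔ constantCoeff (σ := σ) (R := R) A = 0 := by
  constructor
  · intro h; exact h 0 (by simp)
  · intro h d hd
    have : d = 0 := wt_eq_zero (by omega)
    subst this; exact h

lemma OrdGE.pow {A : MvPowerSeries σ R} (hA : constantCoeff (σ := σ) (R := R) A = 0) (n : ℕ) :
    OrdGE (A ^ n) n := by
  induction n with
  | zero => intro d hd; omega
  | succ k ih =>
      have := (OrdGE_one_iff.2 hA).mul ih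
      rw [pow_succ, mul_comm]
      simpa [Nat.add_comm] using this

lemma coeff_pow_eq_zero {A : MvPowerSeries σ R} (hA : constantCoeff (σ := σ) (R := R) A = 0)
    {d : σ →₀ ℕ} {n : ℕ} (h : wt d < n) : coeff d (A ^ n) = 0 :=
  OrdGE.pow hA n d h

lemma OrdGE.sum {ι : Type*} {s : Finset ι} {f : ι → MvPowerSeries σ R} {m : ℕ}
    (h : ∀ i ∈ s, OrdGE (f i) m) : OrdGE (∑ i ∈ s, f i) m := by
  intro d hd
  rw [map_sum]
  exact Finset.sum_eq_zero fun i hi => h i hi d hd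

end LT
namespace LT
variable {R : Type*} [CommRing R] {σ : Type*}

lemma coeff_PSsubst_def (A : MvPowerSeries σ R) (f : PowerSeries R) (d : σ →₀ ℕ) :
    coeff d (PSsubst A f) =
      ∑ n ∈ range (wt d + 1), PowerSeries.coeff n f * coeff d (A ^ n) := by
  have : coeff d (PSsubst A f) = ∑ n ∈ range (wt d + 1),
      algebraMap R R (PowerSeries.coeff n f) * coeff d (A ^ n) := rfl
  simpa using this

lemma coeff_PSsubst {A : MvPowerSeries σ R} (hA : constantCoeff (σ := σ) (R := R) A = 0)
    (f : PowerSeries R) {d : σ →₀ ℕ} {N : ℕ} (hN : wt d < N) :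
    coeff d (PSsubst A f) =
      ∑ n ∈ range N, PowerSeries.coeff n f * coeff d (A ^ n) := by
  rw [coeff_PSsubst_def]
  refine Finset.sum_subset (Finset.range_subset_range.2 (by omega)) fun x hx hnx => ?_
  rw [coeff_pow_eq_zero hA (by simp only [Finset.mem_range] at hnx ⊢; omega), mul_zero]

lemma coeff_PSsubst_congr (A : MvPowerSeries σ R) {f g : PowerSeries R} {N : ℕ}
    (hfg : ∀ n < N, PowerSeries.coeff n f = PowerSeries.coeff n g)
    {d : σ →₀ ℕ} (hN : wt d < N) :
    coeff d (PSsubst A f) = coeff d (PSsubst A g) := by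
  rw [coeff_PSsubst_def, coeff_PSsubst_def]
  refine Finset.sum_congr rfl fun n hn => ?_
  rw [hfg n (by simp only [Finset.mem_range] at hn; omega)]

lemma PSsubst_zero (A : MvPowerSeries σ R) : PSsubst A (0 : PowerSeries R) = 0 := by
  ext d
  simp [coeff_PSsubst_def]

lemma PSsubst_add (A : MvPowerSeries σ R) (f g : PowerSeries R) :
    PSsubst A (f + g) = PSsubst A f + PSsubst A g := by
  ext d
  simp [coeff_PSsubst_def, add_mul, Finset.sum_add_distrib]

lemma PSsubst_sub (A : MvPowerSeries σ R) (f g : PowerSeries R) :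
    PSsubst A (f - g) = PSsubst A f - PSsubst A g := by
  ext d
  simp [coeff_PSsubst_def, sub_mul, Finset.sum_sub_distrib]

lemma PSsubst_sum (A : MvPowerSeries σ R) {ι : Type*} (s : Finset ι) (f : ι → PowerSeries R) :
    PSsubst A (∑ i ∈ s, f i) = ∑ i ∈ s, PSsubst A (f i) := by
  classical
  induction s using Finset.induction with
  | empty => simp [PSsubst_zero]
  | insert _ _ hx ih =>
      rw [Finset.sum_insert hx, PSsubst_add, ih, Finset.sum_insert hx]

lemma PSsubst_one (A : MvPowerSeries σ R) : PSsubst A (1 : PowerSeries R) = 1 := by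
  ext d
  rw [coeff_PSsubst_def]
  rw [Finset.sum_eq_single 0 (fun b _ hb => by
    rw [PowerSeries.coeff_one, if_neg hb, zero_mul]) (fun h => (h (by simp)).elim)]
  simp

lemma PSsubst_monomial {A : MvPowerSeries σ R} (hA : constantCoeff (σ := σ) (R := R) A = 0)
    (k : ℕ) (c : R) :
    PSsubst A (PowerSeries.monomial k c) = c • A ^ k := by
  ext d
  rw [coeff_PSsubst_def, MvPowerSeries.coeff_smul]
  by_cases hk : k ≤ wt d
  · rw [Finset.sum_eq_single k (fun b _ hb => by
      rw [PowerSeries.coeff_monomial, if_neg hb, zero_mul])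
      (fun h => (h (by simp only [Finset.mem_range]; omega)).elim)]
    rw [PowerSeries.coeff_monomial, if_pos rfl]
  · rw [Finset.sum_eq_zero fun b hb => by
      simp only [Finset.mem_range] at hb
      rw [PowerSeries.coeff_monomial, if_neg (by omega), zero_mul]]
    rw [coeff_pow_eq_zero hA (by omega), mul_zero]

lemma PSsubst_X {A : MvPowerSeries σ R} (hA : constantCoeff (σ := σ) (R := R) A = 0) :
    PSsubst A (PowerSeries.X : PowerSeries R) = A := by
  have : (PowerSeries.X : PowerSeries R) = PowerSeries.monomial 1 1 := by
    ext n
    simp [PowerSeries.coeff_X, PowerSeries.coeff_monomial]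
  rw [this, PSsubst_monomial hA, one_smul, pow_one]

lemma constantCoeff_PSsubst (A : MvPowerSeries σ R) (f : PowerSeries R) :
    constantCoeff (σ := σ) (R := R) (PSsubst A f) = PowerSeries.constantCoeff f := by
  have h0 : constantCoeff (σ := σ) (R := R) (PSsubst A f) = coeff 0 (PSsubst A f) := by
    rw [coeff_zero_eq_constantCoeff]
  rw [h0, coeff_PSsubst_def]
  simp [wt, PowerSeries.coeff_zero_eq_constantCoeff]

lemma PSsubst_coe {A : MvPowerSeries σ R} (hA : constantCoeff (σ := σ) (R := R) A = 0) (P : Polynomial R) :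
    PSsubst A (P : PowerSeries R) = Polynomial.aeval A P := by
  induction P using Polynomial.induction_on' with
  | add p q hp hq => rw [Polynomial.coe_add, PSsubst_add, hp, hq, map_add]
  | monomial n c =>
      rw [Polynomial.coe_monomial, PSsubst_monomial hA, Polynomial.aeval_monomial,
        Algebra.smul_def]

lemma PSsubst_mul {A : MvPowerSeries σ R} (hA : constantCoeff (σ := σ) (R := R) A = 0)
    (f g : PowerSeries R) :
    PSsubst A (f * g) = PSsubst A f * PSsubst A g := by
  classical
  ext d
  set N := wt d + 1 with hNdef
  have key : ∀ (g : PowerSeries R) (u : σ →₀ ℕ), wt u < N →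
      coeff u (PSsubst A g) = coeff u (PSsubst A ((g.trunc N : Polynomial R) : PowerSeries R)) := by
    intro g u hu
    refine coeff_PSsubst_congr A (fun n hn => ?_) hu
    rw [Polynomial.coeff_coe, PowerSeries.coeff_trunc, if_pos hn]
  have hdN : wt d < N := by omega
  have step1 : coeff d (PSsubst A (f * g)) =
      coeff d (PSsubst A (((f.trunc N * g.trunc N : Polynomial R)) : PowerSeries R)) := by
    refine coeff_PSsubst_congr A (fun n hn => ?_) hdN
    rw [Polynomial.coe_mul, PowerSeries.coeff_mul, PowerSeries.coeff_mul]
    refine Finset.sum_congr rfl fun p hp => ?_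
    rw [Finset.HasAntidiagonal.mem_antidiagonal] at hp
    rw [Polynomial.coeff_coe, Polynomial.coeff_coe, PowerSeries.coeff_trunc,
      PowerSeries.coeff_trunc, if_pos (by omega), if_pos (by omega)]
  rw [step1, PSsubst_coe hA, map_mul, ← PSsubst_coe hA, ← PSsubst_coe hA]
  rw [MvPowerSeries.coeff_mul, MvPowerSeries.coeff_mul]
  refine Finset.sum_congr rfl fun p hp => ?_
  rw [Finset.HasAntidiagonal.mem_antidiagonal] at hp
  have h1 : wt p.1 < N := by
    have := wt_add p.1 p.2; rw [hp] at this; omega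
  have h2 : wt p.2 < N := by
    have := wt_add p.1 p.2; rw [hp] at this; omega
  rw [key f p.1 h1, key g p.2 h2]

lemma PSsubst_pow {A : MvPowerSeries σ R} (hA : constantCoeff (σ := σ) (R := R) A = 0)
    (f : PowerSeries R) (k : ℕ) :
    PSsubst A (f ^ k) = (PSsubst A f) ^ k := by
  induction k with
  | zero => simp [PSsubst_one]
  | succ n ih => rw [pow_succ, pow_succ, PSsubst_mul hA, ih]

end LT
namespace LT
variable {R : Type*} [CommRing R] {σ : Type*}

/-- the exponent `(m, l)` as a `Fin 2 →₀ ℕ` -/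
noncomputable def e2 (m l : ℕ) : Fin 2 →₀ ℕ := Finsupp.single 0 m + Finsupp.single 1 l

@[simp] lemma e2_apply0 (m l : ℕ) : e2 m l 0 = m := by
  simp [e2, Finsupp.single_apply]

@[simp] lemma e2_apply1 (m l : ℕ) : e2 m l 1 = l := by
  simp [e2, Finsupp.single_apply]

@[simp] lemma wt_e2 (m l : ℕ) : wt (e2 m l) = m + l := by
  rw [e2, wt_add, wt_single, wt_single]

lemma fin2_eq (d : Fin 2 →₀ ℕ) : e2 (d 0) (d 1) = d := by
  ext i
  fin_cases i
  · simp
  · simp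

lemma e2_inj {m l m' l' : ℕ} (h : e2 m l = e2 m' l') : m = m' ∧ l = l' := by
  constructor
  · have := congrArg (fun u => u 0) h; simpa using this
  · have := congrArg (fun u => u 1) h; simpa using this

lemma coeff_prodpow_eq_zero {a b : MvPowerSeries σ R}
    (ha : constantCoeff (σ := σ) (R := R) a = 0) (hb : constantCoeff (σ := σ) (R := R) b = 0)
    {d : σ →₀ ℕ} {m l : ℕ} (h : wt d < m + l) :
    coeff d (a ^ m * b ^ l) = 0 :=
  (OrdGE.pow ha m).mul (OrdGE.pow hb l) d h

lemma coeff_MvSubst2_def (a b : MvPowerSeries σ R) (F : MvPowerSeries (Fin 2) R)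
    (d : σ →₀ ℕ) :
    coeff d (MvSubst2 a b F) = ∑ mn ∈ range (wt d + 1) ×ˢ range (wt d + 1),
      coeff (e2 mn.1 mn.2) F * coeff d (a ^ mn.1 * b ^ mn.2) := by
  have : coeff d (MvSubst2 a b F) = ∑ mn ∈ range (wt d + 1) ×ˢ range (wt d + 1),
      algebraMap R R (coeff (e2 mn.1 mn.2) F) * coeff d (a ^ mn.1 * b ^ mn.2) := rfl
  simpa using this

lemma coeff_MvSubst2 {a b : MvPowerSeries σ R}
    (ha : constantCoeff (σ := σ) (R := R) a = 0) (hb : constantCoeff (σ := σ) (R := R) b = 0)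
    (F : MvPowerSeries (Fin 2) R) {d : σ →₀ ℕ} {N : ℕ} (hN : wt d < N) :
    coeff d (MvSubst2 a b F) = ∑ mn ∈ range N ×ˢ range N,
      coeff (e2 mn.1 mn.2) F * coeff d (a ^ mn.1 * b ^ mn.2) := by
  rw [coeff_MvSubst2_def]
  refine Finset.sum_subset (fun x hx => ?_) fun x hx hnx => ?_
  · simp only [Finset.mem_product, Finset.mem_range] at hx ⊢; omega
  · simp only [Finset.mem_product, Finset.mem_range] at hx hnx
    rw [coeff_prodpow_eq_zero ha hb (by omega), mul_zero]

lemma coeff_MvSubst2_congr (a b : MvPowerSeries σ R) {F G : MvPowerSeries (Fin 2) R} {N : ℕ}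
    (hFG : ∀ m < N, ∀ l < N, coeff (e2 m l) F = coeff (e2 m l) G)
    {d : σ →₀ ℕ} (hN : wt d < N) :
    coeff d (MvSubst2 a b F) = coeff d (MvSubst2 a b G) := by
  rw [coeff_MvSubst2_def, coeff_MvSubst2_def]
  refine Finset.sum_congr rfl fun mn hmn => ?_
  simp only [Finset.mem_product, Finset.mem_range] at hmn
  rw [hFG mn.1 (by omega) mn.2 (by omega)]

lemma MvSubst2_zero (a b : MvPowerSeries σ R) : MvSubst2 a b (0 : MvPowerSeries (Fin 2) R) = 0 := by
  ext d; simp [coeff_MvSubst2_def]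

lemma MvSubst2_add (a b : MvPowerSeries σ R) (F G : MvPowerSeries (Fin 2) R) :
    MvSubst2 a b (F + G) = MvSubst2 a b F + MvSubst2 a b G := by
  ext d; simp [coeff_MvSubst2_def, add_mul, Finset.sum_add_distrib]

lemma MvSubst2_sub (a b : MvPowerSeries σ R) (F G : MvPowerSeries (Fin 2) R) :
    MvSubst2 a b (F - G) = MvSubst2 a b F - MvSubst2 a b G := by
  ext d; simp [coeff_MvSubst2_def, sub_mul, Finset.sum_sub_distrib]

lemma MvSubst2_monomial {a b : MvPowerSeries σ R}
    (ha : constantCoeff (σ := σ) (R := R) a = 0) (hb : constantCoeff (σ := σ) (R := R) b = 0)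
    (e : Fin 2 →₀ ℕ) (c : R) :
    MvSubst2 a b (monomial e c) = c • (a ^ (e 0) * b ^ (e 1)) := by
  classical
  ext d
  rw [coeff_MvSubst2_def, MvPowerSeries.coeff_smul]
  by_cases hk : e 0 ≤ wt d ∧ e 1 ≤ wt d
  · rw [Finset.sum_eq_single (e 0, e 1) (fun p hp hne => ?_) (fun h => ?_)]
    · rw [MvPowerSeries.coeff_monomial, if_pos (fin2_eq e)]
    · rw [MvPowerSeries.coeff_monomial, if_neg, zero_mul]
      intro hEq
      rcases e2_inj (hEq.trans (fin2_eq e).symm) with ⟨h1, h2⟩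
      exact hne (by rw [Prod.ext_iff]; exact ⟨h1, h2⟩)
    · exact (h (by simp only [Finset.mem_product, Finset.mem_range]; omega)).elim
  · rw [Finset.sum_eq_zero fun p hp => ?_, coeff_prodpow_eq_zero ha hb (by omega), mul_zero]
    simp only [Finset.mem_product, Finset.mem_range] at hp
    rw [MvPowerSeries.coeff_monomial]
    by_cases hEq : e2 p.1 p.2 = e
    · exfalso
      have h0 := congrArg (fun u => u 0) hEq
      have h1 := congrArg (fun u => u 1) hEq
      simp only [e2_apply0, e2_apply1] at h0 h1
      omega
    · rw [if_neg hEq, zero_mul]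

lemma MvSubst2_one (a b : MvPowerSeries σ R) :
    MvSubst2 a b (1 : MvPowerSeries (Fin 2) R) = 1 := by
  classical
  ext d
  rw [coeff_MvSubst2_def]
  rw [Finset.sum_eq_single (0, 0) (fun p hp hne => ?_) (fun h => ?_)]
  · have : e2 0 0 = (0 : Fin 2 →₀ ℕ) := by ext i; fin_cases i <;> simp
    rw [this]
    simp
  · rw [MvPowerSeries.coeff_one, if_neg, zero_mul]
    intro hEq
    have h0 := congrArg (fun u => u 0) hEq
    have h1 := congrArg (fun u => u 1) hEq
    simp only [e2_apply0, e2_apply1, Finsupp.coe_zero, Pi.zero_apply] at h0 h1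
    exact hne (by rw [Prod.ext_iff]; exact ⟨h0, h1⟩)
  · exact (h (by simp)).elim

lemma constantCoeff_MvSubst2 (a b : MvPowerSeries σ R) (F : MvPowerSeries (Fin 2) R) :
    constantCoeff (σ := σ) (R := R) (MvSubst2 a b F) = constantCoeff (σ := Fin 2) (R := R) F := by
  have h0 : constantCoeff (σ := σ) (R := R) (MvSubst2 a b F) = coeff 0 (MvSubst2 a b F) := by
    rw [coeff_zero_eq_constantCoeff]
  rw [h0, coeff_MvSubst2_def]
  have : wt (0 : σ →₀ ℕ) = 0 := wt_zero
  rw [this]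
  rw [Finset.sum_eq_single (0, 0) (fun p hp hne => ?_) (fun h => ?_)]
  · have he : e2 0 0 = (0 : Fin 2 →₀ ℕ) := by ext i; fin_cases i <;> simp
    rw [he]
    simp [coeff_zero_eq_constantCoeff]
  · simp only [Finset.mem_product, Finset.mem_range] at hp
    exact absurd (Prod.ext_iff.2 ⟨by omega, by omega⟩) hne
  · exact (h (by simp)).elim

end LT
namespace LT
variable {R : Type*} [CommRing R] {σ : Type*}

lemma MvSubst2_coe {a b : MvPowerSeries σ R}
    (ha : constantCoeff (σ := σ) (R := R) a = 0) (hb : constantCoeff (σ := σ) (R := R) b = 0)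
    (P : MvPolynomial (Fin 2) R) :
    MvSubst2 a b (P : MvPowerSeries (Fin 2) R) = MvPolynomial.aeval ![a, b] P := by
  induction P using MvPolynomial.induction_on' with
  | add p q hp hq => rw [MvPolynomial.coe_add, MvSubst2_add, hp, hq, map_add]
  | monomial e c =>
      rw [MvPolynomial.coe_monomial, MvSubst2_monomial ha hb, MvPolynomial.aeval_monomial,
        Algebra.smul_def]
      congr 1
      rw [Finsupp.prod_fintype _ _ (fun i => pow_zero _), Fin.prod_univ_two]
      simp

lemma le_of_add_eq {u v d : Fin 2 →₀ ℕ} (h : u + v = d) : u ≤ d := by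
  intro i
  have := congrArg (fun w => w i) h
  simp only [Finsupp.coe_add, Pi.add_apply] at this
  omega

lemma e2_lt {m l N : ℕ} (hm : m < N) (hl : l < N) : e2 m l < e2 N N := by
  constructor
  · intro i
    fin_cases i <;> simp <;> omega
  · intro hle
    have := hle (0 : Fin 2)
    simp at this
    omega

lemma MvSubst2_mul {a b : MvPowerSeries σ R}
    (ha : constantCoeff (σ := σ) (R := R) a = 0) (hb : constantCoeff (σ := σ) (R := R) b = 0)
    (F G : MvPowerSeries (Fin 2) R) :
    MvSubst2 a b (F * G) = MvSubst2 a b F * MvSubst2 a b G := by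
  classical
  ext d
  set N := wt d + 1 with hNdef
  set t : Fin 2 →₀ ℕ := e2 N N with htdef
  have coeff_tr : ∀ (H : MvPowerSeries (Fin 2) R) (e : Fin 2 →₀ ℕ), e < t →
      coeff e ((MvPowerSeries.trunc R t H : MvPolynomial (Fin 2) R) : MvPowerSeries (Fin 2) R)
        = coeff e H := by
    intro H e he
    rw [MvPolynomial.coeff_coe, MvPowerSeries.coeff_trunc, if_pos he]
  have key : ∀ (H : MvPowerSeries (Fin 2) R) (u : σ →₀ ℕ), wt u < N →
      coeff u (MvSubst2 a b H) =
        coeff u (MvSubst2 a b ((MvPowerSeries.trunc R t H : MvPolynomial (Fin 2) R) :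
          MvPowerSeries (Fin 2) R)) := by
    intro H u hu
    refine coeff_MvSubst2_congr a b (fun m hm l hl => ?_) hu
    rw [coeff_tr H _ (e2_lt hm hl)]
  have hdN : wt d < N := by omega
  have step1 : coeff d (MvSubst2 a b (F * G)) =
      coeff d (MvSubst2 a b (((MvPowerSeries.trunc R t F * MvPowerSeries.trunc R t G :
        MvPolynomial (Fin 2) R)) : MvPowerSeries (Fin 2) R)) := by
    refine coeff_MvSubst2_congr a b (fun m hm l hl => ?_) hdN
    rw [MvPolynomial.coe_mul, MvPowerSeries.coeff_mul, MvPowerSeries.coeff_mul]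
    refine Finset.sum_congr rfl fun p hp => ?_
    rw [Finset.HasAntidiagonal.mem_antidiagonal] at hp
    have h1 : p.1 < t := lt_of_le_of_lt (le_of_add_eq hp) (e2_lt hm hl)
    have h2 : p.2 < t := lt_of_le_of_lt (le_of_add_eq (by rw [add_comm]; exact hp))
      (e2_lt hm hl)
    rw [coeff_tr F _ h1, coeff_tr G _ h2]
  rw [step1, MvSubst2_coe ha hb, map_mul, ← MvSubst2_coe ha hb, ← MvSubst2_coe ha hb]
  rw [MvPowerSeries.coeff_mul, MvPowerSeries.coeff_mul]
  refine Finset.sum_congr rfl fun p hp => ?_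
  rw [Finset.HasAntidiagonal.mem_antidiagonal] at hp
  have h1 : wt p.1 < N := by have := wt_add p.1 p.2; rw [hp] at this; omega
  have h2 : wt p.2 < N := by have := wt_add p.1 p.2; rw [hp] at this; omega
  rw [key F p.1 h1, key G p.2 h2]

lemma MvSubst2_pow {a b : MvPowerSeries σ R}
    (ha : constantCoeff (σ := σ) (R := R) a = 0) (hb : constantCoeff (σ := σ) (R := R) b = 0)
    (F : MvPowerSeries (Fin 2) R) (k : ℕ) :
    MvSubst2 a b (F ^ k) = (MvSubst2 a b F) ^ k := by
  induction k with
  | zero => simp [MvSubst2_one]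
  | succ n ih => rw [pow_succ, pow_succ, MvSubst2_mul ha hb, ih]

end LT
namespace LT
variable {R : Type*} [CommRing R]

lemma OrdGE.mono {σ : Type*} {A : MvPowerSeries σ R} {m m' : ℕ} (h : OrdGE A m)
    (hm : m' ≤ m) : OrdGE A m' := fun d hd => h d (by omega)

lemma unit_d_eq (d : Unit →₀ ℕ) : d = Finsupp.single () (d ()) := by
  ext i
  simp [Finsupp.single_apply]

lemma wt_unit (d : Unit →₀ ℕ) : wt d = d () := by
  conv_lhs => rw [unit_d_eq d]
  rw [wt_single]

lemma PS_coeff_eq (n : ℕ) (g : PowerSeries R) :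
    PowerSeries.coeff n g = MvPowerSeries.coeff (Finsupp.single () n) g := rfl

lemma PS_constantCoeff_eq (g : PowerSeries R) :
    PowerSeries.constantCoeff g = MvPowerSeries.constantCoeff (σ := Unit) (R := R) g := rfl

lemma OrdGE_of_coeffs {u : PowerSeries R} {n : ℕ}
    (h : ∀ j < n, PowerSeries.coeff j u = 0) :
    OrdGE (u : MvPowerSeries Unit R) n := by
  intro d hd
  rw [unit_d_eq d, ← PS_coeff_eq]
  exact h (d ()) (by rw [wt_unit] at hd; omega)

lemma coeff_pow_eq_zero' {f : PowerSeries R} (hf : PowerSeries.constantCoeff f = 0)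
    {n k : ℕ} (h : n < k) : PowerSeries.coeff n (f ^ k) = 0 := by
  have : OrdGE ((f ^ k : PowerSeries R) : MvPowerSeries Unit R) k := by
    have h1 : OrdGE (f : MvPowerSeries Unit R) 1 :=
      OrdGE_one_iff.2 (by rw [← PS_constantCoeff_eq]; exact hf)
    have h2 := OrdGE.pow (A := (f : MvPowerSeries Unit R))
      (by rw [← PS_constantCoeff_eq]; exact hf) k
    intro d hd
    exact h2 d hd
  rw [PS_coeff_eq]
  exact this _ (by rw [wt_single]; omega)

lemma coeff_self_pow {f : PowerSeries R} (hf : PowerSeries.constantCoeff f = 0) (n : ℕ) :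
    PowerSeries.coeff n (f ^ n) = (PowerSeries.coeff 1 f) ^ n := by
  induction n with
  | zero => simp
  | succ k ih =>
      rw [pow_succ, PowerSeries.coeff_mul]
      rw [Finset.sum_eq_single (k, 1) (fun p hp hne => ?_) (fun hmem => ?_)]
      · rw [ih, pow_succ]
      · rw [Finset.HasAntidiagonal.mem_antidiagonal] at hp
        by_cases h1 : p.1 < k
        · rw [coeff_pow_eq_zero' hf (by omega), zero_mul]
        · have h2 : p.2 = 0 ∨ (p.1 = k ∧ p.2 = 1) := by omega
          rcases h2 with h2 | h2
          · have : p = (k + 1, 0) := Prod.ext_iff.2 ⟨by omega, h2⟩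
            rw [this]
            simp [PowerSeries.coeff_zero_eq_constantCoeff, hf]
          · exact (hne (Prod.ext_iff.2 h2)).elim
      · exact (hmem (by rw [Finset.HasAntidiagonal.mem_antidiagonal])).elim

lemma coeff_PSsubst_unit {A : PowerSeries R} (hA : PowerSeries.constantCoeff A = 0)
    (f : PowerSeries R) {n N : ℕ} (hN : n < N) :
    PowerSeries.coeff n (PSsubst (A : MvPowerSeries Unit R) f) =
      ∑ k ∈ range N, PowerSeries.coeff k f * PowerSeries.coeff n (A ^ k) := by
  have h0 : PowerSeries.coeff n (PSsubst (A : MvPowerSeries Unit R) f) =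
      MvPowerSeries.coeff (Finsupp.single () n) (PSsubst (A : MvPowerSeries Unit R) f) := rfl
  rw [h0, coeff_PSsubst (N := N) (by rw [← PS_constantCoeff_eq]; exact hA) f
    (by rw [wt_single]; omega)]
  rfl

lemma constantCoeff_PSsubst_unit (A : PowerSeries R) (f : PowerSeries R) :
    PowerSeries.constantCoeff (PSsubst (A : MvPowerSeries Unit R) f) =
      PowerSeries.constantCoeff f := by
  rw [PS_constantCoeff_eq, constantCoeff_PSsubst]

variable [IsDomain R] [IsLocalRing R]

lemma pi_pow_cancel {π : R} (hπ0 : π ≠ 0) (hπm : π ∈ IsLocalRing.maximalIdeal R)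
    {n : ℕ} (hn : 2 ≤ n) {x : R} (hx : π ^ n * x = π * x) : x = 0 := by
  have hfac : π ^ n = π * π ^ (n - 1) := by
    conv_lhs => rw [show n = 1 + (n - 1) by omega]
    rw [pow_add, pow_one]
  rw [hfac, mul_assoc] at hx
  have hcan : π ^ (n - 1) * x = x := mul_left_cancel₀ hπ0 hx
  have hmem : π ^ (n - 1) ∈ IsLocalRing.maximalIdeal R :=
    Ideal.pow_mem_of_mem _ hπm _ (by omega)
  have hunit : IsUnit (1 - π ^ (n - 1)) :=
    IsLocalRing.isUnit_one_sub_self_of_mem_nonunits _ hmem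
  have hz : (1 - π ^ (n - 1)) * x = 0 := by rw [sub_mul, one_mul, hcan, sub_self]
  rcases mul_eq_zero.1 hz with hcase | hcase
  · rw [hcase] at hunit
    exact (hunit.ne_zero rfl).elim
  · exact hcase

lemma LT_unique {π : R} (hπ0 : π ≠ 0) (hπm : π ∈ IsLocalRing.maximalIdeal R)
    {f : PowerSeries R} (hf0 : PowerSeries.constantCoeff f = 0)
    (hf1 : PowerSeries.coeff 1 f = π) {a : R} {h h' : PowerSeries R}
    (H : IsLTBracket f a h) (H' : IsLTBracket f a h') : h = h' := by
  obtain ⟨h0, h1, hc⟩ := H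
  obtain ⟨h'0, h'1, hc'⟩ := H'
  have key : ∀ n, PowerSeries.coeff n h = PowerSeries.coeff n h' := by
    intro n
    induction n using Nat.strong_induction_on with
    | _ n IH =>
      rcases n with _ | n
      · simp only [PowerSeries.coeff_zero_eq_constantCoeff]
        rw [h0, h'0]
      rcases n with _ | m
      · rw [h1, h'1]
      set n := m + 2 with hn
      have hEqc : PowerSeries.coeff n (PSsubst (f : MvPowerSeries Unit R) h) -
          PowerSeries.coeff n (PSsubst (f : MvPowerSeries Unit R) h') =
          PowerSeries.coeff n (PSsubst (h : MvPowerSeries Unit R) f) -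
          PowerSeries.coeff n (PSsubst (h' : MvPowerSeries Unit R) f) := by
        rw [hc, hc']
      have hD : ∀ j < n, PowerSeries.coeff j (h - h') = 0 := by
        intro j hj
        rw [map_sub, IH j hj, sub_self]
      have hNn : n < n + 1 := by omega
      have lhs_eq : PowerSeries.coeff n (PSsubst (f : MvPowerSeries Unit R) h) -
          PowerSeries.coeff n (PSsubst (f : MvPowerSeries Unit R) h') =
          π ^ n * (PowerSeries.coeff n h - PowerSeries.coeff n h') := by
      -- (h - h') composed with f
        have hsub : PSsubst (f : MvPowerSeries Unit R) h - PSsubst (f : MvPowerSeries Unit R) h'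
            = PSsubst (f : MvPowerSeries Unit R) (h - h') := (PSsubst_sub _ _ _).symm
        calc PowerSeries.coeff n (PSsubst (f : MvPowerSeries Unit R) h) -
            PowerSeries.coeff n (PSsubst (f : MvPowerSeries Unit R) h')
            = PowerSeries.coeff n (PSsubst (f : MvPowerSeries Unit R) (h - h')) := by
              rw [← map_sub, hsub]
          _ = ∑ k ∈ range (n + 1), PowerSeries.coeff k (h - h') *
                PowerSeries.coeff n (f ^ k) := coeff_PSsubst_unit hf0 _ hNn
          _ = π ^ n * (PowerSeries.coeff n h - PowerSeries.coeff n h') := by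
              rw [Finset.sum_eq_single n (fun k hk hkn => ?_) (fun hmem => ?_)]
              · rw [coeff_self_pow hf0, hf1, map_sub, mul_comm]
              · rw [hD k (by simp only [Finset.mem_range] at hk; omega), zero_mul]
              · exact (hmem (by simp only [Finset.mem_range]; omega)).elim
      have rhs_eq : PowerSeries.coeff n (PSsubst (h : MvPowerSeries Unit R) f) -
          PowerSeries.coeff n (PSsubst (h' : MvPowerSeries Unit R) f) =
          π * (PowerSeries.coeff n h - PowerSeries.coeff n h') := by
        rw [coeff_PSsubst_unit h0 f hNn, coeff_PSsubst_unit h'0 f hNn,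
          ← Finset.sum_sub_distrib]
        rw [Finset.sum_eq_single 1 (fun k hk hkn => ?_) (fun hmem => ?_)]
        · rw [hf1, pow_one, pow_one, ← mul_sub, ← map_sub]
        · rcases Nat.eq_zero_or_pos k with hk0 | hkpos
          · subst hk0; simp
          · have hk2 : 2 ≤ k := by omega
            rw [← mul_sub, ← map_sub]
            have hzero : PowerSeries.coeff n (h ^ k - h' ^ k) = 0 := by
              have hgeom : (h : PowerSeries R) ^ k - h' ^ k =
                  (∑ i ∈ range k, h ^ i * h' ^ (k - 1 - i)) * (h - h') :=
                (geom_sum₂_mul _ _ k).symm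
              rw [hgeom, PS_coeff_eq]
              have hord : OrdGE (((∑ i ∈ range k, h ^ i * h' ^ (k - 1 - i)) * (h - h') :
                  PowerSeries R) : MvPowerSeries Unit R) (1 + n) := by
                have hmul : OrdGE ((∑ i ∈ range k, h ^ i * h' ^ (k - 1 - i) :
                    PowerSeries R) : MvPowerSeries Unit R) 1 := by
                  intro d hd
                  rw [map_sum]
                  refine Finset.sum_eq_zero fun i hi => ?_
                  simp only [Finset.mem_range] at hi
                  have hhg : MvPowerSeries.constantCoeff (σ := Unit) (R := R) h = 0 := by
                    rw [← PS_constantCoeff_eq]; exact h0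
                  have hh'g : MvPowerSeries.constantCoeff (σ := Unit) (R := R) h' = 0 := by
                    rw [← PS_constantCoeff_eq]; exact h'0
                  have := ((OrdGE.pow hhg i).mul (OrdGE.pow hh'g (k - 1 - i))).mono
                    (m' := 1) (by omega)
                  exact this d hd
                exact hmul.mul (OrdGE_of_coeffs hD)
              exact hord _ (by rw [wt_single]; omega)
            rw [hzero, mul_zero]
        · exact (hmem (by simp only [Finset.mem_range]; omega)).elim
      have heq2 : π ^ n * (PowerSeries.coeff n h - PowerSeries.coeff n h') =
          π * (PowerSeries.coeff n h - PowerSeries.coeff n h') := by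
        rw [← lhs_eq, ← rhs_eq]
        exact hEqc
      exact sub_eq_zero.1 (pi_pow_cancel hπ0 hπm (by omega) heq2)
  exact PowerSeries.ext key

end LT
namespace LT
variable {R : Type*} [CommRing R] {σ : Type*}

/-- `g(h)(A) = g(h(A))` -/
lemma PSsubst_PSsubst {A : MvPowerSeries σ R} (hA : constantCoeff (σ := σ) (R := R) A = 0)
    {h : PowerSeries R} (hh : MvPowerSeries.constantCoeff (σ := Unit) (R := R) h = 0) (g : PowerSeries R) :
    PSsubst A (PSsubst (h : MvPowerSeries Unit R) g) = PSsubst (PSsubst A h) g := by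
  ext d
  set N := wt d + 1 with hNdef
  have hdN : wt d < N := by omega
  have hgood : constantCoeff (σ := σ) (R := R) (PSsubst A h) = 0 := by
    rw [constantCoeff_PSsubst, PS_constantCoeff_eq, hh]
  rw [coeff_PSsubst hA _ hdN, coeff_PSsubst hgood g hdN]
  have lhs_inner : ∀ n ∈ range N,
      PowerSeries.coeff n (PSsubst (h : MvPowerSeries Unit R) g) * coeff d (A ^ n) =
      ∑ k ∈ range N, PowerSeries.coeff k g * PowerSeries.coeff n (h ^ k) * coeff d (A ^ n) := by
    intro n hn
    simp only [Finset.mem_range] at hn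
    rw [PS_coeff_eq n, coeff_PSsubst (N := N) hh g (by rw [wt_single]; omega), Finset.sum_mul]
    refine Finset.sum_congr rfl fun k _ => ?_
    rw [PS_coeff_eq n (h ^ k)]
  rw [Finset.sum_congr rfl lhs_inner]
  have rhs_inner : ∀ k ∈ range N,
      PowerSeries.coeff k g * coeff d ((PSsubst A h) ^ k) =
      ∑ n ∈ range N, PowerSeries.coeff k g * PowerSeries.coeff n (h ^ k) * coeff d (A ^ n) := by
    intro k _
    rw [← PSsubst_pow hA, coeff_PSsubst hA _ hdN, Finset.mul_sum]
    refine Finset.sum_congr rfl fun n _ => ?_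
    rw [PS_coeff_eq n (h ^ k), mul_assoc]
  rw [Finset.sum_congr rfl rhs_inner, Finset.sum_comm]

/-- `h(F)(a,b) = h(F(a,b))` -/
lemma MvSubst2_PSsubst {a b : MvPowerSeries σ R}
    (ha : constantCoeff (σ := σ) (R := R) a = 0) (hb : constantCoeff (σ := σ) (R := R) b = 0)
    {F : MvPowerSeries (Fin 2) R} (hF : constantCoeff (σ := Fin 2) (R := R) F = 0) (h : PowerSeries R) :
    MvSubst2 a b (PSsubst F h) = PSsubst (MvSubst2 a b F) h := by
  ext d
  set N := wt d + 1 with hNdef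
  set K := 2 * wt d + 1 with hKdef
  have hdN : wt d < N := by omega
  have hdK : wt d < K := by omega
  have hgood : constantCoeff (σ := σ) (R := R) (MvSubst2 a b F) = 0 := by
    rw [constantCoeff_MvSubst2, hF]
  rw [coeff_MvSubst2 ha hb _ hdN, coeff_PSsubst hgood h hdK]
  have lhs_inner : ∀ mn ∈ range N ×ˢ range N,
      coeff (e2 mn.1 mn.2) (PSsubst F h) * coeff d (a ^ mn.1 * b ^ mn.2) =
      ∑ k ∈ range K, PowerSeries.coeff k h * coeff (e2 mn.1 mn.2) (F ^ k) *
        coeff d (a ^ mn.1 * b ^ mn.2) := by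
    intro mn hmn
    simp only [Finset.mem_product, Finset.mem_range] at hmn
    rw [coeff_PSsubst (N := K) hF h (by rw [wt_e2]; omega), Finset.sum_mul]
  rw [Finset.sum_congr rfl lhs_inner]
  have rhs_inner : ∀ k ∈ range K,
      PowerSeries.coeff k h * coeff d ((MvSubst2 a b F) ^ k) =
      ∑ mn ∈ range N ×ˢ range N, PowerSeries.coeff k h * coeff (e2 mn.1 mn.2) (F ^ k) *
        coeff d (a ^ mn.1 * b ^ mn.2) := by
    intro k _
    rw [← MvSubst2_pow ha hb, coeff_MvSubst2 ha hb _ hdN, Finset.mul_sum]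
    refine Finset.sum_congr rfl fun mn _ => ?_
    rw [mul_assoc]
  rw [Finset.sum_congr rfl rhs_inner, Finset.sum_comm]

lemma coeff_PSsubst_X_self {i : σ} {d : σ →₀ ℕ} (hd : Finsupp.single i (d i) = d)
    (g : PowerSeries R) :
    coeff d (PSsubst (X i : MvPowerSeries σ R) g) = PowerSeries.coeff (d i) g := by
  classical
  rw [coeff_PSsubst_def]
  have hXpow : ∀ n : ℕ, coeff d ((X i : MvPowerSeries σ R) ^ n) =
      if Finsupp.single i n = d then 1 else 0 := by
    intro n
    rw [MvPowerSeries.X_pow_eq, MvPowerSeries.coeff_monomial]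
    by_cases h : d = Finsupp.single i n
    · rw [if_pos h, if_pos h.symm]
    · rw [if_neg h, if_neg fun hh => h hh.symm]
  rw [Finset.sum_eq_single (d i) (fun n _ hn => ?_) (fun hmem => ?_)]
  · rw [hXpow, if_pos hd, mul_one]
  · rw [hXpow, if_neg, mul_zero]
    intro hh
    exact hn (by have := congrArg (fun u => u i) hh; simpa using this)
  · exact (hmem (by
      simp only [Finset.mem_range]
      exact lt_of_le_of_lt (apply_le_wt d i) (by omega))).elim

lemma coeff_PSsubst_X_ne {i : σ} {d : σ →₀ ℕ} (hd : Finsupp.single i (d i) ≠ d)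
    (g : PowerSeries R) :
    coeff d (PSsubst (X i : MvPowerSeries σ R) g) = 0 := by
  classical
  rw [coeff_PSsubst_def]
  have hXpow : ∀ n : ℕ, coeff d ((X i : MvPowerSeries σ R) ^ n) =
      if Finsupp.single i n = d then 1 else 0 := by
    intro n
    rw [MvPowerSeries.X_pow_eq, MvPowerSeries.coeff_monomial]
    by_cases h : d = Finsupp.single i n
    · rw [if_pos h, if_pos h.symm]
    · rw [if_neg h, if_neg fun hh => h hh.symm]
  refine Finset.sum_eq_zero fun n _ => ?_
  rw [hXpow, if_neg, mul_zero]
  intro hh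
  have hn : n = d i := by have := congrArg (fun u => u i) hh; simpa using this
  exact hd (hn ▸ hh)

lemma single0_eq_e2 {m l : ℕ} : (Finsupp.single (0 : Fin 2) m = e2 m l) ↔ l = 0 := by
  constructor
  · intro h
    have := congrArg (fun u => u (1 : Fin 2)) h
    simpa [Finsupp.single_apply] using this.symm
  · intro h
    subst h
    ext i
    fin_cases i <;> simp [Finsupp.single_apply]

lemma single1_eq_e2 {m l : ℕ} : (Finsupp.single (1 : Fin 2) l = e2 m l) ↔ m = 0 := by
  constructor
  · intro h
    have := congrArg (fun u => u (0 : Fin 2)) h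
    simpa [Finsupp.single_apply] using this.symm
  · intro h
    subst h
    ext i
    fin_cases i <;> simp [Finsupp.single_apply]

/-- `g(X₀)(a,b) = g(a)` -/
lemma MvSubst2_PSsubst_X0 {a b : MvPowerSeries σ R}
    (ha : constantCoeff (σ := σ) (R := R) a = 0) (hb : constantCoeff (σ := σ) (R := R) b = 0) (g : PowerSeries R) :
    MvSubst2 a b (PSsubst (X 0 : MvPowerSeries (Fin 2) R) g) = PSsubst a g := by
  ext d
  set N := wt d + 1 with hNdef
  have hdN : wt d < N := by omega
  rw [coeff_MvSubst2 ha hb _ hdN, coeff_PSsubst (N := N) ha g hdN, Finset.sum_product]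
  refine Finset.sum_congr rfl fun m _ => ?_
  rw [Finset.sum_eq_single 0 (fun l _ hl => ?_) (fun hmem => ?_)]
  · have h1 : Finsupp.single (0 : Fin 2) (e2 m 0 0) = e2 m 0 := by
      rw [e2_apply0]; exact single0_eq_e2.2 rfl
    rw [coeff_PSsubst_X_self h1, e2_apply0, pow_zero, mul_one]
  · have h1 : Finsupp.single (0 : Fin 2) (e2 m l 0) ≠ e2 m l := by
      rw [e2_apply0]; exact fun hh => hl (single0_eq_e2.1 hh)
    rw [coeff_PSsubst_X_ne h1, zero_mul]
  · exact (hmem (by simp only [Finset.mem_range]; omega)).elim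

/-- `g(X₁)(a,b) = g(b)` -/
lemma MvSubst2_PSsubst_X1 {a b : MvPowerSeries σ R}
    (ha : constantCoeff (σ := σ) (R := R) a = 0) (hb : constantCoeff (σ := σ) (R := R) b = 0) (g : PowerSeries R) :
    MvSubst2 a b (PSsubst (X 1 : MvPowerSeries (Fin 2) R) g) = PSsubst b g := by
  ext d
  set N := wt d + 1 with hNdef
  have hdN : wt d < N := by omega
  rw [coeff_MvSubst2 ha hb _ hdN, coeff_PSsubst (N := N) hb g hdN, Finset.sum_product_right]
  refine Finset.sum_congr rfl fun l _ => ?_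
  rw [Finset.sum_eq_single 0 (fun m _ hm => ?_) (fun hmem => ?_)]
  · have h1 : Finsupp.single (1 : Fin 2) (e2 0 l 1) = e2 0 l := by
      rw [e2_apply1]; exact single1_eq_e2.2 rfl
    rw [coeff_PSsubst_X_self h1, e2_apply1, pow_zero, one_mul]
  · have h1 : Finsupp.single (1 : Fin 2) (e2 m l 1) ≠ e2 m l := by
      rw [e2_apply1]; exact fun hh => hm (single1_eq_e2.1 hh)
    rw [coeff_PSsubst_X_ne h1, zero_mul]
  · exact (hmem (by simp only [Finset.mem_range]; omega)).elim

/-- `F(c₀,c₁)(a,b) = F(c₀(a,b), c₁(a,b))` -/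
lemma MvSubst2_MvSubst2 {a b : MvPowerSeries σ R}
    (ha : constantCoeff (σ := σ) (R := R) a = 0) (hb : constantCoeff (σ := σ) (R := R) b = 0)
    {c0 c1 : MvPowerSeries (Fin 2) R}
    (hc0 : constantCoeff (σ := Fin 2) (R := R) c0 = 0) (hc1 : constantCoeff (σ := Fin 2) (R := R) c1 = 0)
    (F : MvPowerSeries (Fin 2) R) :
    MvSubst2 a b (MvSubst2 c0 c1 F) =
      MvSubst2 (MvSubst2 a b c0) (MvSubst2 a b c1) F := by
  ext d
  set N := wt d + 1 with hNdef
  have hdN : wt d < N := by omega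
  have hg0 : constantCoeff (σ := σ) (R := R) (MvSubst2 a b c0) = 0 := by rw [constantCoeff_MvSubst2, hc0]
  have hg1 : constantCoeff (σ := σ) (R := R) (MvSubst2 a b c1) = 0 := by rw [constantCoeff_MvSubst2, hc1]
  rw [coeff_MvSubst2 ha hb _ hdN, coeff_MvSubst2 hg0 hg1 F hdN]
  have rhs_inner : ∀ uv ∈ range N ×ˢ range N,
      coeff (e2 uv.1 uv.2) F * coeff d ((MvSubst2 a b c0) ^ uv.1 * (MvSubst2 a b c1) ^ uv.2) =
      ∑ mn ∈ range N ×ˢ range N, coeff (e2 uv.1 uv.2) F *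
        coeff (e2 mn.1 mn.2) (c0 ^ uv.1 * c1 ^ uv.2) * coeff d (a ^ mn.1 * b ^ mn.2) := by
    intro uv _
    rw [← MvSubst2_pow ha hb, ← MvSubst2_pow ha hb, ← MvSubst2_mul ha hb,
      coeff_MvSubst2 ha hb _ hdN, Finset.mul_sum]
    refine Finset.sum_congr rfl fun mn _ => ?_
    rw [mul_assoc]
  rw [Finset.sum_congr rfl rhs_inner, Finset.sum_comm]
  refine Finset.sum_congr rfl fun mn hmn => ?_
  simp only [Finset.mem_product, Finset.mem_range] at hmn
  by_cases hml : mn.1 + mn.2 ≤ wt d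
  · rw [coeff_MvSubst2 (N := N) hc0 hc1 F (by rw [wt_e2]; omega), Finset.sum_mul]
  · have hz : coeff d (a ^ mn.1 * b ^ mn.2) = 0 :=
      coeff_prodpow_eq_zero ha hb (by omega)
    rw [hz, mul_zero]
    exact (Finset.sum_eq_zero fun uv _ => mul_zero _).symm

end LT
namespace LT
variable {R : Type*} [CommRing R]

lemma wt_fin2 (d : Fin 2 →₀ ℕ) : wt d = d 0 + d 1 := by
  conv_lhs => rw [← fin2_eq d]
  rw [wt_e2]

lemma coeff_mul_X0X1 (g h : PowerSeries R) (d : Fin 2 →₀ ℕ) :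
    coeff d (PSsubst (X 0 : MvPowerSeries (Fin 2) R) g *
      PSsubst (X 1 : MvPowerSeries (Fin 2) R) h) =
      PowerSeries.coeff (d 0) g * PowerSeries.coeff (d 1) h := by
  classical
  rw [MvPowerSeries.coeff_mul]
  rw [Finset.sum_eq_single (Finsupp.single 0 (d 0), Finsupp.single 1 (d 1))
    (fun p hp hne => ?_) (fun hmem => ?_)]
  · rw [coeff_PSsubst_X_self (by rw [Finsupp.single_eq_same]),
      coeff_PSsubst_X_self (by rw [Finsupp.single_eq_same]),
      Finsupp.single_eq_same, Finsupp.single_eq_same]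
  · rw [Finset.HasAntidiagonal.mem_antidiagonal] at hp
    by_cases hu : Finsupp.single (0 : Fin 2) (p.1 0) = p.1
    · by_cases hv : Finsupp.single (1 : Fin 2) (p.2 1) = p.2
      · exfalso
        have h0 := congrArg (fun w => w (0 : Fin 2)) hp
        have h1 := congrArg (fun w => w (1 : Fin 2)) hp
        have hv0 : p.2 0 = 0 := by
          rw [← hv]; simp [Finsupp.single_apply]
        have hu1 : p.1 1 = 0 := by
          rw [← hu]; simp [Finsupp.single_apply]
        simp only [Finsupp.coe_add, Pi.add_apply] at h0 h1
        have hp1 : p.1 = Finsupp.single 0 (d 0) := by rw [← hu]; congr 1; omega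
        have hp2 : p.2 = Finsupp.single 1 (d 1) := by rw [← hv]; congr 1; omega
        exact hne (Prod.ext_iff.2 ⟨hp1, hp2⟩)
      · rw [coeff_PSsubst_X_ne hv, mul_zero]
    · rw [coeff_PSsubst_X_ne hu, zero_mul]
  · refine (hmem ?_).elim
    rw [Finset.HasAntidiagonal.mem_antidiagonal]
    exact fin2_eq d

variable [IsDomain R] [IsLocalRing R]

lemma LT_unique2 {π : R} (hπ0 : π ≠ 0) (hπm : π ∈ IsLocalRing.maximalIdeal R)
    {f : PowerSeries R} (hf0 : PowerSeries.constantCoeff f = 0)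
    (hf1 : PowerSeries.coeff 1 f = π) {G G' : MvPowerSeries (Fin 2) R}
    (hG0 : constantCoeff (σ := Fin 2) (R := R) G = 0) (hG'0 : constantCoeff (σ := Fin 2) (R := R) G' = 0)
    (hlin0 : coeff (e2 1 0) G = coeff (e2 1 0) G')
    (hlin1 : coeff (e2 0 1) G = coeff (e2 0 1) G')
    (hc : PSsubst G f = MvSubst2 (PSsubst (X 0 : MvPowerSeries (Fin 2) R) f)
      (PSsubst (X 1 : MvPowerSeries (Fin 2) R) f) G)
    (hc' : PSsubst G' f = MvSubst2 (PSsubst (X 0 : MvPowerSeries (Fin 2) R) f)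
      (PSsubst (X 1 : MvPowerSeries (Fin 2) R) f) G') :
    G = G' := by
  have hX0 : constantCoeff (σ := Fin 2) (R := R) (X 0) = 0 := MvPowerSeries.constantCoeff_X 0
  have hX1 : constantCoeff (σ := Fin 2) (R := R) (X 1) = 0 := MvPowerSeries.constantCoeff_X 1
  have hf0g : constantCoeff (σ := Fin 2) (R := R) (PSsubst (X 0 : MvPowerSeries (Fin 2) R) f) = 0 := by
    rw [constantCoeff_PSsubst, hf0]
  have hf1g : constantCoeff (σ := Fin 2) (R := R) (PSsubst (X 1 : MvPowerSeries (Fin 2) R) f) = 0 := by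
    rw [constantCoeff_PSsubst, hf0]
  have key : ∀ n : ℕ, ∀ d : Fin 2 →₀ ℕ, wt d = n → coeff d (G - G') = 0 := by
    intro n
    induction n using Nat.strong_induction_on with
    | _ n IH =>
      intro d hd
      rcases n with _ | n
      · have hd0 : d = 0 := wt_eq_zero hd
        subst hd0
        rw [map_sub]
        simp only [coeff_zero_eq_constantCoeff, hG0, hG'0, sub_self]
      rcases n with _ | m
      · have hw : d 0 + d 1 = 1 := by rw [← wt_fin2 d, hd]
        rcases Nat.eq_zero_or_pos (d 0) with h0 | h0
        · have hd1 : d 1 = 1 := by omega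
          have : d = e2 0 1 := by rw [← fin2_eq d, h0, hd1]
          rw [this, map_sub, hlin1, sub_self]
        · have hd0 : d 0 = 1 := by omega
          have hd1 : d 1 = 0 := by omega
          have : d = e2 1 0 := by rw [← fin2_eq d, hd0, hd1]
          rw [this, map_sub, hlin0, sub_self]
      set n := m + 2 with hn
      have hordD : OrdGE (G - G') n := fun e he => IH (wt e) he e rfl
      have hNd : wt d < n + 1 := by omega
      have hEqc : coeff d (PSsubst G f) - coeff d (PSsubst G' f) =
          coeff d (MvSubst2 (PSsubst (X 0 : MvPowerSeries (Fin 2) R) f)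
            (PSsubst (X 1 : MvPowerSeries (Fin 2) R) f) G) -
          coeff d (MvSubst2 (PSsubst (X 0 : MvPowerSeries (Fin 2) R) f)
            (PSsubst (X 1 : MvPowerSeries (Fin 2) R) f) G') := by
        rw [hc, hc']
      have lhs_eq : coeff d (PSsubst G f) - coeff d (PSsubst G' f) =
          π * coeff d (G - G') := by
        rw [coeff_PSsubst (N := n + 1) hG0 f hNd, coeff_PSsubst (N := n + 1) hG'0 f hNd,
          ← Finset.sum_sub_distrib]
        have hterm : ∀ k, PowerSeries.coeff k f * coeff d (G ^ k) -
            PowerSeries.coeff k f * coeff d (G' ^ k) =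
            PowerSeries.coeff k f * coeff d (G ^ k - G' ^ k) := by
          intro k
          rw [← mul_sub, ← map_sub]
        rw [Finset.sum_congr rfl fun k _ => hterm k]
        rw [Finset.sum_eq_single 1 (fun k hk hkn => ?_) (fun hmem => ?_)]
        · rw [hf1, pow_one, pow_one, map_sub]
        · rcases Nat.eq_zero_or_pos k with hk0 | hkpos
          · subst hk0; simp
          · have hk2 : 2 ≤ k := by omega
            have hgeom : G ^ k - G' ^ k =
                (∑ i ∈ range k, G ^ i * G' ^ (k - 1 - i)) * (G - G') :=
              (geom_sum₂_mul _ _ k).symm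
            have hord : OrdGE ((∑ i ∈ range k, G ^ i * G' ^ (k - 1 - i)) * (G - G')) (1 + n) := by
              refine OrdGE.mul ?_ hordD
              refine OrdGE.sum fun i hi => ?_
              exact ((OrdGE.pow hG0 i).mul (OrdGE.pow hG'0 (k - 1 - i))).mono (by
                simp only [Finset.mem_range] at hi; omega)
            rw [hgeom, hord d (by omega), mul_zero]
        · exact (hmem (by simp only [Finset.mem_range]; omega)).elim
      have rhs_eq : coeff d (MvSubst2 (PSsubst (X 0 : MvPowerSeries (Fin 2) R) f)
            (PSsubst (X 1 : MvPowerSeries (Fin 2) R) f) G) -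
          coeff d (MvSubst2 (PSsubst (X 0 : MvPowerSeries (Fin 2) R) f)
            (PSsubst (X 1 : MvPowerSeries (Fin 2) R) f) G') =
          π ^ n * coeff d (G - G') := by
        rw [← map_sub, ← MvSubst2_sub, coeff_MvSubst2 (N := n + 1) hf0g hf1g _ hNd]
        have hterm : ∀ mn : ℕ × ℕ,
            coeff d ((PSsubst (X 0 : MvPowerSeries (Fin 2) R) f) ^ mn.1 *
              (PSsubst (X 1 : MvPowerSeries (Fin 2) R) f) ^ mn.2) =
            PowerSeries.coeff (d 0) (f ^ mn.1) * PowerSeries.coeff (d 1) (f ^ mn.2) := by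
          intro mn
          rw [← PSsubst_pow hX0, ← PSsubst_pow hX1, coeff_mul_X0X1]
        rw [Finset.sum_eq_single (d 0, d 1) (fun p hp hne => ?_) (fun hmem => ?_)]
        · rw [hterm, coeff_self_pow hf0, coeff_self_pow hf0, hf1, ← pow_add,
            ← wt_fin2 d, hd, fin2_eq d, mul_comm]
        · rw [hterm]
          simp only [Finset.mem_product, Finset.mem_range] at hp
          by_cases hm1 : d 0 < p.1
          · rw [coeff_pow_eq_zero' hf0 hm1, zero_mul, mul_zero]
          · by_cases hm2 : d 1 < p.2
            · rw [coeff_pow_eq_zero' hf0 hm2, mul_zero, mul_zero]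
            · have hlt : p.1 + p.2 < n := by
                have hw : d 0 + d 1 = n := by rw [← wt_fin2 d, hd]
                have : p.1 ≠ d 0 ∨ p.2 ≠ d 1 := by
                  by_contra hcon
                  push_neg at hcon
                  exact hne (Prod.ext_iff.2 ⟨hcon.1, hcon.2⟩)
                omega
              rw [IH (p.1 + p.2) hlt (e2 p.1 p.2) (wt_e2 _ _), zero_mul]
        · refine (hmem ?_).elim
          simp only [Finset.mem_product, Finset.mem_range]
          constructor
          · have := apply_le_wt d 0; omega
          · have := apply_le_wt d 1; omega
      rw [lhs_eq, rhs_eq] at hEqc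
      exact pi_pow_cancel hπ0 hπm (by omega) hEqc.symm
  have : G - G' = 0 := by
    ext d
    rw [key (wt d) d rfl, map_zero]
  rw [← sub_eq_zero]
  exact this
  
end LT
namespace LT
variable {R : Type*} [CommRing R]

lemma e2_10 : e2 1 0 = Finsupp.single (0 : Fin 2) 1 := by
  rw [e2, Finsupp.single_zero, add_zero]

lemma e2_01 : e2 0 1 = Finsupp.single (1 : Fin 2) 1 := by
  rw [e2, Finsupp.single_zero, zero_add]

lemma coeff_pows_X0X1 (g k : PowerSeries R) (u v : ℕ) (d : Fin 2 →₀ ℕ) :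
    coeff d ((PSsubst (X 0 : MvPowerSeries (Fin 2) R) g) ^ u *
      (PSsubst (X 1 : MvPowerSeries (Fin 2) R) k) ^ v) =
      PowerSeries.coeff (d 0) (g ^ u) * PowerSeries.coeff (d 1) (k ^ v) := by
  rw [← PSsubst_pow (MvPowerSeries.constantCoeff_X 0), ← PSsubst_pow
    (MvPowerSeries.constantCoeff_X 1), coeff_mul_X0X1]

/-- linear coefficient of `h(F)` -/
lemma coeff_lin_PSsubst {F : MvPowerSeries (Fin 2) R} (hF0 : constantCoeff (σ := Fin 2) (R := R) F = 0)
    (h : PowerSeries R) (d : Fin 2 →₀ ℕ) (hd : wt d = 1) :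
    coeff d (PSsubst F h) = PowerSeries.coeff 1 h * coeff d F := by
  rw [coeff_PSsubst (N := 2) hF0 h (by omega)]
  rw [Finset.sum_range_succ, Finset.sum_range_one]
  have hz : coeff d (F ^ 0) = 0 := by
    rw [pow_zero, MvPowerSeries.coeff_one, if_neg (by
      intro hdd; rw [hdd] at hd; simp at hd)]
  rw [hz, mul_zero, zero_add, pow_one]

/-- linear coefficients of `F(h(X₀),h(X₁))` -/
lemma coeff_lin_MvSubst2 {F : MvPowerSeries (Fin 2) R}
    (hFl : coeff (Finsupp.single 0 1) F = 1) (hFr : coeff (Finsupp.single 1 1) F = 1)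
    {h : PowerSeries R} (hh0 : PowerSeries.constantCoeff h = 0) :
    coeff (e2 1 0) (MvSubst2 (PSsubst (X 0 : MvPowerSeries (Fin 2) R) h)
      (PSsubst (X 1 : MvPowerSeries (Fin 2) R) h) F) = PowerSeries.coeff 1 h ∧
    coeff (e2 0 1) (MvSubst2 (PSsubst (X 0 : MvPowerSeries (Fin 2) R) h)
      (PSsubst (X 1 : MvPowerSeries (Fin 2) R) h) F) = PowerSeries.coeff 1 h := by
  have hh0g : constantCoeff (σ := Fin 2) (R := R) (PSsubst (X 0 : MvPowerSeries (Fin 2) R) h) = 0 := by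
    rw [constantCoeff_PSsubst, hh0]
  have hh1g : constantCoeff (σ := Fin 2) (R := R) (PSsubst (X 1 : MvPowerSeries (Fin 2) R) h) = 0 := by
    rw [constantCoeff_PSsubst, hh0]
  constructor
  · rw [coeff_MvSubst2 (N := 2) hh0g hh1g F (by rw [wt_e2]; omega), Finset.sum_product]
    rw [Finset.sum_range_succ, Finset.sum_range_one, Finset.sum_range_succ,
      Finset.sum_range_one, Finset.sum_range_succ, Finset.sum_range_one]
    rw [coeff_pows_X0X1, coeff_pows_X0X1, coeff_pows_X0X1, coeff_pows_X0X1]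
    simp only [e2_apply0, e2_apply1, pow_zero, pow_one, PowerSeries.coeff_one,
      PowerSeries.coeff_zero_eq_constantCoeff, hh0, e2_10]
    simp [hFl, hh0]
  · rw [coeff_MvSubst2 (N := 2) hh0g hh1g F (by rw [wt_e2]; omega), Finset.sum_product]
    rw [Finset.sum_range_succ, Finset.sum_range_one, Finset.sum_range_succ,
      Finset.sum_range_one, Finset.sum_range_succ, Finset.sum_range_one]
    rw [coeff_pows_X0X1, coeff_pows_X0X1, coeff_pows_X0X1, coeff_pows_X0X1]
    simp only [e2_apply0, e2_apply1, pow_zero, pow_one, PowerSeries.coeff_one,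
      PowerSeries.coeff_zero_eq_constantCoeff, hh0, e2_01]
    simp [hFr, hh0]

variable [IsDomain R] [IsLocalRing R]

lemma LT_endo {π : R} (hπ0 : π ≠ 0) (hπm : π ∈ IsLocalRing.maximalIdeal R)
    {f : PowerSeries R} (hf0 : PowerSeries.constantCoeff f = 0)
    (hf1 : PowerSeries.coeff 1 f = π) {F : MvPowerSeries (Fin 2) R}
    (hF0 : constantCoeff (σ := Fin 2) (R := R) F = 0)
    (hFl : coeff (Finsupp.single 0 1) F = 1) (hFr : coeff (Finsupp.single 1 1) F = 1)
    (hFendo : IsEndoOf f F) {a : R} {h : PowerSeries R} (hbr : IsLTBracket f a h) :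
    IsEndoOf h F := by
  obtain ⟨h0, h1, hcomm⟩ := hbr
  have hfU : MvPowerSeries.constantCoeff (σ := Unit) (R := R) f = 0 := by
    rw [← PS_constantCoeff_eq]; exact hf0
  have hhU : MvPowerSeries.constantCoeff (σ := Unit) (R := R) h = 0 := by
    rw [← PS_constantCoeff_eq]; exact h0
  have hX0 : constantCoeff (σ := Fin 2) (R := R) (X 0) = 0 := MvPowerSeries.constantCoeff_X 0
  have hX1 : constantCoeff (σ := Fin 2) (R := R) (X 1) = 0 := MvPowerSeries.constantCoeff_X 1
  set f0 : MvPowerSeries (Fin 2) R := PSsubst (X 0 : MvPowerSeries (Fin 2) R) f with hf0def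
  set f1 : MvPowerSeries (Fin 2) R := PSsubst (X 1 : MvPowerSeries (Fin 2) R) f with hf1def
  set hh0 : MvPowerSeries (Fin 2) R := PSsubst (X 0 : MvPowerSeries (Fin 2) R) h with hh0def
  set hh1 : MvPowerSeries (Fin 2) R := PSsubst (X 1 : MvPowerSeries (Fin 2) R) h with hh1def
  have hf0g : constantCoeff (σ := Fin 2) (R := R) f0 = 0 := by rw [hf0def, constantCoeff_PSsubst, hf0]
  have hf1g : constantCoeff (σ := Fin 2) (R := R) f1 = 0 := by rw [hf1def, constantCoeff_PSsubst, hf0]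
  have hh0g : constantCoeff (σ := Fin 2) (R := R) hh0 = 0 := by rw [hh0def, constantCoeff_PSsubst, h0]
  have hh1g : constantCoeff (σ := Fin 2) (R := R) hh1 = 0 := by rw [hh1def, constantCoeff_PSsubst, h0]
  set G1 : MvPowerSeries (Fin 2) R := PSsubst F h with hG1def
  set G2 : MvPowerSeries (Fin 2) R := MvSubst2 hh0 hh1 F with hG2def
  have hG10 : constantCoeff (σ := Fin 2) (R := R) G1 = 0 := by
    rw [hG1def, constantCoeff_PSsubst, h0]
  have hG20 : constantCoeff (σ := Fin 2) (R := R) G2 = 0 := by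
    rw [hG2def, constantCoeff_MvSubst2, hF0]
  -- linear coefficients agree
  obtain ⟨hl0, hl1⟩ := coeff_lin_MvSubst2 hFl hFr h0
  have hlin0 : coeff (e2 1 0) G1 = coeff (e2 1 0) G2 := by
    rw [hG1def, coeff_lin_PSsubst hF0 h _ (by rw [wt_e2]), hG2def, hl0, e2_10, hFl, mul_one]
  have hlin1 : coeff (e2 0 1) G1 = coeff (e2 0 1) G2 := by
    rw [hG1def, coeff_lin_PSsubst hF0 h _ (by rw [wt_e2]), hG2def, hl1, e2_01, hFr, mul_one]
  -- commutation of G1 with f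
  have hcG1 : PSsubst G1 f = MvSubst2 f0 f1 G1 := by
    calc PSsubst G1 f = PSsubst (PSsubst F h) f := rfl
      _ = PSsubst F (PSsubst (h : MvPowerSeries Unit R) f) := (PSsubst_PSsubst hF0 hhU f).symm
      _ = PSsubst F (PSsubst (f : MvPowerSeries Unit R) h) := by rw [hcomm]
      _ = PSsubst (PSsubst F f) h := PSsubst_PSsubst hF0 hfU h
      _ = PSsubst (MvSubst2 f0 f1 F) h := by rw [hFendo]
      _ = MvSubst2 f0 f1 (PSsubst F h) := (MvSubst2_PSsubst hf0g hf1g hF0 h).symm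
  -- commutation of G2 with f
  have haux0 : PSsubst hh0 f = PSsubst f0 h := by
    calc PSsubst hh0 f = PSsubst (PSsubst (X 0 : MvPowerSeries (Fin 2) R) h) f := rfl
      _ = PSsubst (X 0 : MvPowerSeries (Fin 2) R) (PSsubst (h : MvPowerSeries Unit R) f) :=
        (PSsubst_PSsubst hX0 hhU f).symm
      _ = PSsubst (X 0 : MvPowerSeries (Fin 2) R) (PSsubst (f : MvPowerSeries Unit R) h) := by
        rw [hcomm]
      _ = PSsubst f0 h := PSsubst_PSsubst hX0 hfU h
  have haux1 : PSsubst hh1 f = PSsubst f1 h := by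
    calc PSsubst hh1 f = PSsubst (PSsubst (X 1 : MvPowerSeries (Fin 2) R) h) f := rfl
      _ = PSsubst (X 1 : MvPowerSeries (Fin 2) R) (PSsubst (h : MvPowerSeries Unit R) f) :=
        (PSsubst_PSsubst hX1 hhU f).symm
      _ = PSsubst (X 1 : MvPowerSeries (Fin 2) R) (PSsubst (f : MvPowerSeries Unit R) h) := by
        rw [hcomm]
      _ = PSsubst f1 h := PSsubst_PSsubst hX1 hfU h
  have hcG2 : PSsubst G2 f = MvSubst2 f0 f1 G2 := by
    calc PSsubst G2 f = PSsubst (MvSubst2 hh0 hh1 F) f := rfl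
      _ = MvSubst2 hh0 hh1 (PSsubst F f) := (MvSubst2_PSsubst hh0g hh1g hF0 f).symm
      _ = MvSubst2 hh0 hh1 (MvSubst2 f0 f1 F) := by rw [hFendo]
      _ = MvSubst2 (MvSubst2 hh0 hh1 f0) (MvSubst2 hh0 hh1 f1) F :=
        MvSubst2_MvSubst2 hh0g hh1g hf0g hf1g F
      _ = MvSubst2 (PSsubst hh0 f) (PSsubst hh1 f) F := by
        rw [hf0def, hf1def, MvSubst2_PSsubst_X0 hh0g hh1g, MvSubst2_PSsubst_X1 hh0g hh1g]
      _ = MvSubst2 (PSsubst f0 h) (PSsubst f1 h) F := by rw [haux0, haux1]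
      _ = MvSubst2 (MvSubst2 f0 f1 hh0) (MvSubst2 f0 f1 hh1) F := by
        rw [hh0def, hh1def, MvSubst2_PSsubst_X0 hf0g hf1g, MvSubst2_PSsubst_X1 hf0g hf1g]
      _ = MvSubst2 f0 f1 (MvSubst2 hh0 hh1 F) :=
        (MvSubst2_MvSubst2 hf0g hf1g hh0g hh1g F).symm
  exact LT_unique2 hπ0 hπm hf0 hf1 hG10 hG20 hlin0 hlin1 hcG1 hcG2

end LT
namespace LT
variable {R : Type*} [CommRing R]

/-- the defect `f(ψ) - ψ(f)` -/
noncomputable def LTdef (f ψ : PowerSeries R) : MvPowerSeries Unit R :=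
  PSsubst (ψ : MvPowerSeries Unit R) f - PSsubst (f : MvPowerSeries Unit R) ψ

open Classical in
/-- next coefficient in the Lubin-Tate recursion -/
noncomputable def LTc (π : R) (f : PowerSeries R) (a : R) (n : ℕ) (ψ : PowerSeries R) : R :=
  if n = 0 then 0
  else if n = 1 then a
  else if hh : ∃ t : R, PowerSeries.coeff n (LTdef f ψ) + (π - π ^ n) * t = 0
    then hh.choose else 0

/-- successive polynomial approximations of `[a]_f` -/
noncomputable def LTphi (π : R) (f : PowerSeries R) (a : R) : ℕ → PowerSeries R
  | 0 => 0
  | n + 1 => LTphi π f a n + PowerSeries.monomial n (LTc π f a n (LTphi π f a n))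

lemma LTphi_coeff_high (π : R) (f : PowerSeries R) (a : R) :
    ∀ n j, n ≤ j → PowerSeries.coeff j (LTphi π f a n) = 0 := by
  intro n
  induction n with
  | zero => intro j _; simp [LTphi]
  | succ m ih =>
      intro j hj
      rw [LTphi, map_add, ih j (by omega), PowerSeries.coeff_monomial,
        if_neg (by omega), add_zero]

lemma LTphi_coeff_stable (π : R) (f : PowerSeries R) (a : R) :
    ∀ n m j, n ≤ m → j < n → PowerSeries.coeff j (LTphi π f a m) =
      PowerSeries.coeff j (LTphi π f a n) := by
  intro n m
  induction m with
  | zero => intro j hnm _; interval_cases n; rfl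
  | succ k ih =>
      intro j hnm hj
      rcases Nat.lt_or_ge n (k + 1) with hlt | hge
      · rw [LTphi, map_add, PowerSeries.coeff_monomial, if_neg (by omega), add_zero]
        exact ih j (by omega) hj
      · have : n = k + 1 := by omega
        subst this; rfl

lemma LTphi_constantCoeff (π : R) (f : PowerSeries R) (a : R) (n : ℕ) :
    PowerSeries.constantCoeff (LTphi π f a n) = 0 := by
  induction n with
  | zero => simp [LTphi]
  | succ m ih =>
      rw [LTphi, map_add, ih, zero_add, ← PowerSeries.coeff_zero_eq_constantCoeff,
        PowerSeries.coeff_monomial]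
      rcases Nat.eq_zero_or_pos m with hm | hm
      · subst hm; simp [LTc]
      · rw [if_neg (by omega)]

/-- coefficient `i` of the defect only depends on coefficients `≤ i` -/
lemma coeff_pow_congr {ψ ψ' : PowerSeries R} {i : ℕ}
    (hagree : ∀ j ≤ i, PowerSeries.coeff j ψ = PowerSeries.coeff j ψ') (k : ℕ) :
    PowerSeries.coeff i (ψ ^ k) = PowerSeries.coeff i (ψ' ^ k) := by
  induction k generalizing i with
  | zero => rfl
  | succ m ih =>
      rw [pow_succ, pow_succ, PowerSeries.coeff_mul, PowerSeries.coeff_mul]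
      refine Finset.sum_congr rfl fun p hp => ?_
      rw [Finset.HasAntidiagonal.mem_antidiagonal] at hp
      rw [ih (fun j hj => hagree j (by omega)), hagree p.2 (by omega)]

lemma defect_coeff_congr {f ψ ψ' : PowerSeries R}
    (hψ0 : PowerSeries.constantCoeff ψ = 0) (hψ'0 : PowerSeries.constantCoeff ψ' = 0)
    (hf0 : PowerSeries.constantCoeff f = 0) {i : ℕ}
    (hagree : ∀ j ≤ i, PowerSeries.coeff j ψ = PowerSeries.coeff j ψ') :
    PowerSeries.coeff i (LTdef f ψ) = PowerSeries.coeff i (LTdef f ψ') := by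
  rw [LTdef, LTdef, map_sub, map_sub]
  congr 1
  · rw [coeff_PSsubst_unit hψ0 f (N := i + 1) (by omega),
      coeff_PSsubst_unit hψ'0 f (N := i + 1) (by omega)]
    exact Finset.sum_congr rfl fun k _ => by rw [coeff_pow_congr hagree k]
  · rw [coeff_PSsubst_unit hf0 ψ (N := i + 1) (by omega),
      coeff_PSsubst_unit hf0 ψ' (N := i + 1) (by omega)]
    refine Finset.sum_congr rfl fun k hk => ?_
    rw [hagree k (by simp only [Finset.mem_range] at hk; omega)]

lemma defect_coeff0 {f ψ : PowerSeries R} (hf0 : PowerSeries.constantCoeff f = 0)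
    (hψ0 : PowerSeries.constantCoeff ψ = 0) :
    PowerSeries.coeff 0 (LTdef f ψ) = 0 := by
  rw [LTdef, map_sub]
  have h1 : PowerSeries.coeff 0 (PSsubst (ψ : MvPowerSeries Unit R) f) =
      PowerSeries.constantCoeff f := by
    rw [PowerSeries.coeff_zero_eq_constantCoeff, constantCoeff_PSsubst_unit]
  have h2 : PowerSeries.coeff 0 (PSsubst (f : MvPowerSeries Unit R) ψ) =
      PowerSeries.constantCoeff ψ := by
    rw [PowerSeries.coeff_zero_eq_constantCoeff, constantCoeff_PSsubst_unit]
  rw [h1, h2, hf0, hψ0, sub_self]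

lemma defect_coeff1 {f ψ : PowerSeries R} (hf0 : PowerSeries.constantCoeff f = 0)
    (hψ0 : PowerSeries.constantCoeff ψ = 0) :
    PowerSeries.coeff 1 (LTdef f ψ) = 0 := by
  rw [LTdef, map_sub, coeff_PSsubst_unit hψ0 f (N := 2) (by omega),
    coeff_PSsubst_unit hf0 ψ (N := 2) (by omega)]
  rw [Finset.sum_range_succ, Finset.sum_range_one, Finset.sum_range_succ,
    Finset.sum_range_one]
  simp only [pow_zero, pow_one, PowerSeries.coeff_one, if_neg one_ne_zero, mul_zero, zero_add]
  rw [mul_comm, sub_self]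

/-- effect of adding `c·Xⁿ` on coefficient `n` of the defect -/
lemma defect_perturb {f ψ : PowerSeries R} (hf0 : PowerSeries.constantCoeff f = 0)
    (hψ0 : PowerSeries.constantCoeff ψ = 0) {n : ℕ} (hn : 2 ≤ n) (c : R) :
    PowerSeries.coeff n (LTdef f (ψ + PowerSeries.monomial n c)) =
      PowerSeries.coeff n (LTdef f ψ) + PowerSeries.coeff 1 f * c -
        PowerSeries.coeff n (f ^ n) * c := by
  set M : PowerSeries R := PowerSeries.monomial n c with hMdef
  have hM0 : PowerSeries.constantCoeff M = 0 := by
    rw [hMdef, ← PowerSeries.coeff_zero_eq_constantCoeff, PowerSeries.coeff_monomial,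
      if_neg (by omega)]
  have hψM0 : PowerSeries.constantCoeff (ψ + M) = 0 := by
    rw [map_add, hψ0, hM0, add_zero]
  have hA : PowerSeries.coeff n (PSsubst ((ψ + M : PowerSeries R) : MvPowerSeries Unit R) f) =
      PowerSeries.coeff n (PSsubst (ψ : MvPowerSeries Unit R) f) +
        PowerSeries.coeff 1 f * c := by
    rw [coeff_PSsubst_unit hψM0 f (N := n + 1) (by omega),
      coeff_PSsubst_unit hψ0 f (N := n + 1) (by omega)]
    have hterm : ∀ k ∈ range (n + 1),
        PowerSeries.coeff k f * PowerSeries.coeff n ((ψ + M) ^ k) =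
        PowerSeries.coeff k f * PowerSeries.coeff n (ψ ^ k) +
          (if k = 1 then PowerSeries.coeff 1 f * c else 0) := by
      intro k _
      rcases Nat.eq_zero_or_pos k with hk0 | hkpos
      · subst hk0; simp
      rcases Nat.lt_or_ge k 2 with hk1 | hk2
      · have : k = 1 := by omega
        subst this
        rw [pow_one, pow_one, map_add, if_pos rfl, hMdef, PowerSeries.coeff_monomial,
          if_pos rfl, mul_add]
      · have hzero : PowerSeries.coeff n ((ψ + M) ^ k - ψ ^ k) = 0 := by
          have hgeom : (ψ + M) ^ k - ψ ^ k =
              (∑ i ∈ range k, (ψ + M) ^ i * ψ ^ (k - 1 - i)) * ((ψ + M) - ψ) :=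
            (geom_sum₂_mul _ _ k).symm
          rw [hgeom, add_sub_cancel_left, PS_coeff_eq]
          have hord : OrdGE (((∑ i ∈ range k, (ψ + M) ^ i * ψ ^ (k - 1 - i)) * M :
              PowerSeries R) : MvPowerSeries Unit R) (1 + n) := by
            have hs : OrdGE ((∑ i ∈ range k, (ψ + M) ^ i * ψ ^ (k - 1 - i) :
                PowerSeries R) : MvPowerSeries Unit R) 1 := by
              intro d hd
              rw [map_sum]
              refine Finset.sum_eq_zero fun i hi => ?_
              simp only [Finset.mem_range] at hi
              have hψMg : MvPowerSeries.constantCoeff (σ := Unit) (R := R) (ψ + M) = 0 := by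
                rw [← PS_constantCoeff_eq]; exact hψM0
              have hψg : MvPowerSeries.constantCoeff (σ := Unit) (R := R) ψ = 0 := by
                rw [← PS_constantCoeff_eq]; exact hψ0
              exact ((OrdGE.pow hψMg i).mul (OrdGE.pow hψg (k - 1 - i))).mono
                (by omega) d hd
            have hMord : OrdGE ((M : PowerSeries R) : MvPowerSeries Unit R) n :=
              OrdGE_of_coeffs fun j hj => by
                rw [hMdef, PowerSeries.coeff_monomial, if_neg (by omega)]
            exact hs.mul hMord
          exact hord _ (by rw [wt_single]; omega)
        have hz2 : PowerSeries.coeff n ((ψ + M) ^ k) -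
            PowerSeries.coeff n (ψ ^ k) = 0 := by
          rw [← map_sub]; exact hzero
        rw [sub_eq_zero.1 hz2, if_neg (by omega), add_zero]
    rw [Finset.sum_congr rfl hterm, Finset.sum_add_distrib, Finset.sum_ite_eq'
      (range (n + 1)) 1 (fun _ => PowerSeries.coeff 1 f * c),
      if_pos (by simp only [Finset.mem_range]; omega)]
  have hB : PowerSeries.coeff n (PSsubst (f : MvPowerSeries Unit R) (ψ + M)) =
      PowerSeries.coeff n (PSsubst (f : MvPowerSeries Unit R) ψ) +
        PowerSeries.coeff n (f ^ n) * c := by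
    rw [PSsubst_add, map_add]
    congr 1
    rw [coeff_PSsubst_unit hf0 M (N := n + 1) (by omega)]
    rw [Finset.sum_eq_single n (fun k _ hk => ?_) (fun hmem => ?_)]
    · rw [hMdef, PowerSeries.coeff_monomial, if_pos rfl, mul_comm]
    · rw [hMdef, PowerSeries.coeff_monomial, if_neg hk, zero_mul]
    · exact (hmem (by simp only [Finset.mem_range]; omega)).elim
  rw [LTdef, LTdef, map_sub, map_sub, hA, hB]
  ring

lemma coeffs_mul_mem {I : Ideal R} {v w : PowerSeries R}
    (hw : ∀ j, PowerSeries.coeff j w ∈ I) (j : ℕ) :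
    PowerSeries.coeff j (v * w) ∈ I := by
  rw [PowerSeries.coeff_mul]
  exact Ideal.sum_mem I fun p _ => Ideal.mul_mem_left I _ (hw p.2)

lemma coeffs_pow_sub_mem {I : Ideal R} {u v : PowerSeries R}
    (h : ∀ j, PowerSeries.coeff j (u - v) ∈ I) (k : ℕ) (j : ℕ) :
    PowerSeries.coeff j (u ^ k - v ^ k) ∈ I := by
  have hgeom : u ^ k - v ^ k = (∑ i ∈ range k, u ^ i * v ^ (k - 1 - i)) * (u - v) :=
    (geom_sum₂_mul _ _ k).symm
  rw [hgeom]
  exact coeffs_mul_mem h j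

variable [IsLocalRing R]

lemma defect_mem_max {q : ℕ} (hq1 : 1 ≤ q)
    (hfrob : ∀ ψ : PowerSeries R, (∃ B, ∀ j, B ≤ j → PowerSeries.coeff j ψ = 0) → ∀ i,
      PowerSeries.coeff i (ψ ^ q) - PowerSeries.coeff i
        (PSsubst (((PowerSeries.X : PowerSeries R) ^ q : PowerSeries R) :
          MvPowerSeries Unit R) ψ) ∈ IsLocalRing.maximalIdeal R)
    {f : PowerSeries R} (hf0 : PowerSeries.constantCoeff f = 0)
    (hfq : ∀ n, PowerSeries.coeff n f -
      PowerSeries.coeff n (PowerSeries.X ^ q) ∈ IsLocalRing.maximalIdeal R)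
    {ψ : PowerSeries R} (hψ0 : PowerSeries.constantCoeff ψ = 0)
    (hψB : ∃ B, ∀ j, B ≤ j → PowerSeries.coeff j ψ = 0) (i : ℕ) :
    PowerSeries.coeff i (LTdef f ψ) ∈ IsLocalRing.maximalIdeal R := by
  set 𝔪 := IsLocalRing.maximalIdeal R
  have hXq0 : PowerSeries.constantCoeff ((PowerSeries.X : PowerSeries R) ^ q) = 0 := by
    rw [map_pow, PowerSeries.constantCoeff_X, zero_pow (by omega)]
  -- part 1
  have h1 : PowerSeries.coeff i (PSsubst (ψ : MvPowerSeries Unit R) f) -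
      PowerSeries.coeff i (ψ ^ q) ∈ 𝔪 := by
    set N := max (i + 1) (q + 1) with hNdef
    have hiN : i < N := lt_of_lt_of_le (by omega) (le_max_left _ _)
    have hqN : q ∈ range N := by
      simp only [Finset.mem_range]
      exact lt_of_lt_of_le (by omega) (le_max_right _ _)
    rw [coeff_PSsubst_unit hψ0 f (N := N) hiN]
    have hψq : PowerSeries.coeff i (ψ ^ q) =
        ∑ k ∈ range N, (if k = q then (1 : R) else 0) * PowerSeries.coeff i (ψ ^ k) := by
      rw [Finset.sum_congr rfl (fun k _ => by
        rw [ite_mul, one_mul, zero_mul])]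
      rw [Finset.sum_ite_eq' (range N) q (fun k => PowerSeries.coeff i (ψ ^ k)),
        if_pos hqN]
    rw [hψq, ← Finset.sum_sub_distrib]
    refine Ideal.sum_mem _ fun k _ => ?_
    rw [← sub_mul]
    refine Ideal.mul_mem_right _ _ ?_
    have := hfq k
    rwa [PowerSeries.coeff_X_pow] at this
  -- part 2
  have h2 : PowerSeries.coeff i (PSsubst (f : MvPowerSeries Unit R) ψ) -
      PowerSeries.coeff i (PSsubst (((PowerSeries.X : PowerSeries R) ^ q :
        PowerSeries R) : MvPowerSeries Unit R) ψ) ∈ 𝔪 := by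
    rw [coeff_PSsubst_unit hf0 ψ (N := i + 1) (by omega),
      coeff_PSsubst_unit hXq0 ψ (N := i + 1) (by omega), ← Finset.sum_sub_distrib]
    refine Ideal.sum_mem _ fun k _ => ?_
    rw [← mul_sub, ← map_sub]
    refine Ideal.mul_mem_left _ _ ?_
    refine coeffs_pow_sub_mem (fun j => ?_) k i
    rw [map_sub]
    exact hfq j
  -- part 3
  have h3 := hfrob ψ hψB i
  have hsplit : PowerSeries.coeff i (LTdef f ψ) =
      (PowerSeries.coeff i (PSsubst (ψ : MvPowerSeries Unit R) f) -
        PowerSeries.coeff i (ψ ^ q)) -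
      (PowerSeries.coeff i (PSsubst (f : MvPowerSeries Unit R) ψ) -
        PowerSeries.coeff i (PSsubst (((PowerSeries.X : PowerSeries R) ^ q :
          PowerSeries R) : MvPowerSeries Unit R) ψ)) +
      (PowerSeries.coeff i (ψ ^ q) - PowerSeries.coeff i
        (PSsubst (((PowerSeries.X : PowerSeries R) ^ q : PowerSeries R) :
          MvPowerSeries Unit R) ψ)) := by
    rw [LTdef, map_sub]
    ring
  rw [hsplit]
  exact Ideal.add_mem _ (Ideal.sub_mem _ h1 h2) h3

lemma LT_invariant {π : R} (hπspan : IsLocalRing.maximalIdeal R = Ideal.span {π})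
    {q : ℕ} (hq1 : 1 ≤ q)
    (hfrob : ∀ ψ : PowerSeries R, (∃ B, ∀ j, B ≤ j → PowerSeries.coeff j ψ = 0) → ∀ i,
      PowerSeries.coeff i (ψ ^ q) - PowerSeries.coeff i
        (PSsubst (((PowerSeries.X : PowerSeries R) ^ q : PowerSeries R) :
          MvPowerSeries Unit R) ψ) ∈ IsLocalRing.maximalIdeal R)
    {f : PowerSeries R} (hf0 : PowerSeries.constantCoeff f = 0)
    (hf1 : PowerSeries.coeff 1 f = π)
    (hfq : ∀ n, PowerSeries.coeff n f -
      PowerSeries.coeff n (PowerSeries.X ^ q) ∈ IsLocalRing.maximalIdeal R)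
    (a : R) :
    ∀ n, ∀ i < n, PowerSeries.coeff i (LTdef f (LTphi π f a n)) = 0 := by
  intro n
  induction n with
  | zero => intro i hi; omega
  | succ n ih =>
      intro i hi
      set ψ := LTphi π f a n with hψdef
      have hψ0 : PowerSeries.constantCoeff ψ = 0 := LTphi_constantCoeff π f a n
      have hφ'0 : PowerSeries.constantCoeff (LTphi π f a (n + 1)) = 0 :=
        LTphi_constantCoeff π f a (n + 1)
      rcases Nat.lt_or_ge i n with hin | hin
      · have hagree : ∀ j ≤ i, PowerSeries.coeff j (LTphi π f a (n + 1)) =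
            PowerSeries.coeff j ψ := by
          intro j hj
          rw [LTphi, map_add, PowerSeries.coeff_monomial, if_neg (by omega), add_zero]
        rw [defect_coeff_congr hφ'0 hψ0 hf0 hagree]
        exact ih i hin
      · have hieq : i = n := by omega
        subst hieq
        rcases Nat.lt_or_ge i 2 with hi2 | hi2
        · rcases Nat.eq_zero_or_pos i with h0 | h1
          · subst h0; exact defect_coeff0 hf0 hφ'0
          · have : i = 1 := by omega
            subst this; exact defect_coeff1 hf0 hφ'0
        · -- the real case: use the recursion
          show PowerSeries.coeff i (LTdef f (ψ + PowerSeries.monomial i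
            (LTc π f a i ψ))) = 0
          rw [defect_perturb hf0 hψ0 hi2, hf1, coeff_self_pow hf0, hf1]
          -- solve for the choice
          have hEm : PowerSeries.coeff i (LTdef f ψ) ∈ IsLocalRing.maximalIdeal R :=
            defect_mem_max hq1 hfrob hf0 hfq hψ0 ⟨i, fun j hj =>
              LTphi_coeff_high π f a i j hj⟩ i
          rw [hπspan, Ideal.mem_span_singleton] at hEm
          obtain ⟨s, hs⟩ := hEm
          have hπm : π ∈ IsLocalRing.maximalIdeal R := by
            rw [hπspan]; exact Ideal.mem_span_singleton_self π
          have hunit : IsUnit (1 - π ^ (i - 1)) :=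
            IsLocalRing.isUnit_one_sub_self_of_mem_nonunits _
              (Ideal.pow_mem_of_mem _ hπm _ (by omega))
          obtain ⟨u, hu⟩ := hunit
          have hex : ∃ t : R, PowerSeries.coeff i (LTdef f ψ) + (π - π ^ i) * t = 0 := by
            refine ⟨-(↑u⁻¹ * s), ?_⟩
            have hππ : π - π ^ i = π * (1 - π ^ (i - 1)) := by
              rw [mul_sub, mul_one]
              congr 1
              rw [← pow_succ']
              congr 1
              omega
            have hcancel : (1 - π ^ (i - 1)) * (↑u⁻¹ * s) = s := by
              rw [← hu, ← mul_assoc, Units.mul_inv, one_mul]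
            rw [hs, hππ, mul_neg, mul_assoc, hcancel]
            ring
          have hc : LTc π f a i ψ = hex.choose := by
            rw [LTc, if_neg (by omega), if_neg (by omega), dif_pos hex]
          have hspec := hex.choose_spec
          rw [hc]
          linear_combination hspec

lemma LT_exists {π : R} (hπspan : IsLocalRing.maximalIdeal R = Ideal.span {π})
    {q : ℕ} (hq1 : 1 ≤ q)
    (hfrob : ∀ ψ : PowerSeries R, (∃ B, ∀ j, B ≤ j → PowerSeries.coeff j ψ = 0) → ∀ i,
      PowerSeries.coeff i (ψ ^ q) - PowerSeries.coeff i
        (PSsubst (((PowerSeries.X : PowerSeries R) ^ q : PowerSeries R) :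
          MvPowerSeries Unit R) ψ) ∈ IsLocalRing.maximalIdeal R)
    {f : PowerSeries R} (hf0 : PowerSeries.constantCoeff f = 0)
    (hf1 : PowerSeries.coeff 1 f = π)
    (hfq : ∀ n, PowerSeries.coeff n f -
      PowerSeries.coeff n (PowerSeries.X ^ q) ∈ IsLocalRing.maximalIdeal R)
    (a : R) : ∃ h : PowerSeries R, IsLTBracket f a h := by
  set h : PowerSeries R := PowerSeries.mk
    (fun n => PowerSeries.coeff n (LTphi π f a (n + 1))) with hhdef
  have hagree : ∀ m, ∀ j < m, PowerSeries.coeff j h =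
      PowerSeries.coeff j (LTphi π f a m) := by
    intro m j hj
    rw [hhdef, PowerSeries.coeff_mk]
    exact (LTphi_coeff_stable π f a (j + 1) m j (by omega) (by omega)).symm
  have hh0 : PowerSeries.constantCoeff h = 0 := by
    rw [← PowerSeries.coeff_zero_eq_constantCoeff, hagree 1 0 (by omega),
      PowerSeries.coeff_zero_eq_constantCoeff]
    exact LTphi_constantCoeff π f a 1
  have hh1 : PowerSeries.coeff 1 h = a := by
    rw [hagree 2 1 (by omega)]
    show PowerSeries.coeff 1 (LTphi π f a 1 + PowerSeries.monomial 1
      (LTc π f a 1 (LTphi π f a 1))) = a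
    rw [map_add, LTphi_coeff_high π f a 1 1 (by omega), PowerSeries.coeff_monomial,
      if_pos rfl, zero_add, LTc, if_neg one_ne_zero, if_pos rfl]
  refine ⟨h, hh0, hh1, ?_⟩
  have hdef : ∀ n, PowerSeries.coeff n (LTdef f h) = 0 := by
    intro n
    have hφ'0 := LTphi_constantCoeff π f a (n + 1)
    rw [defect_coeff_congr hh0 hφ'0 hf0 (fun j hj => hagree (n + 1) j (by omega))]
    exact LT_invariant hπspan hq1 hfrob hf0 hf1 hfq a (n + 1) n (by omega)
  have : ∀ n, PowerSeries.coeff n (PSsubst (f : MvPowerSeries Unit R) h) =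
      PowerSeries.coeff n (PSsubst (h : MvPowerSeries Unit R) f) := by
    intro n
    have := hdef n
    rw [LTdef, map_sub] at this
    have := sub_eq_zero.1 this
    exact this.symm
  exact PowerSeries.ext this

end LT
namespace LT
variable {R : Type*} [CommRing R]

lemma coeff_PSsubst_unit_def (A g : PowerSeries R) (n : ℕ) :
    PowerSeries.coeff n (PSsubst (A : MvPowerSeries Unit R) g) =
      ∑ k ∈ range (n + 1), PowerSeries.coeff k g * PowerSeries.coeff n (A ^ k) := by
  have h := coeff_PSsubst_def (A : MvPowerSeries Unit R) g (Finsupp.single () n)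
  rw [wt_single] at h
  exact h

lemma PSsubst_map_coeff {S : Type*} [CommRing S] (ρ : R →+* S) (A g : PowerSeries R) (n : ℕ) :
    PowerSeries.coeff n (PSsubst ((PowerSeries.map ρ A : PowerSeries S) :
      MvPowerSeries Unit S) (PowerSeries.map ρ g)) =
    ρ (PowerSeries.coeff n (PSsubst (A : MvPowerSeries Unit R) g)) := by
  rw [coeff_PSsubst_unit_def, coeff_PSsubst_unit_def, map_sum]
  refine Finset.sum_congr rfl fun k _ => ?_
  rw [map_mul, PowerSeries.coeff_map, ← map_pow, PowerSeries.coeff_map]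

lemma monomial_smul_Xpow {K : Type*} [CommRing K] (n : ℕ) (c : K) :
    c • ((PowerSeries.X : PowerSeries K) ^ n) = PowerSeries.monomial n c := by
  ext j
  rw [PowerSeries.coeff_smul, PowerSeries.coeff_X_pow, PowerSeries.coeff_monomial,
    smul_eq_mul, mul_ite, mul_one, mul_zero]

lemma frob_ps {K : Type*} [Field K] [Fintype K] {q : ℕ} (hcard : Fintype.card K = q)
    {g : PowerSeries K} {B : ℕ} (hB : ∀ j, B ≤ j → PowerSeries.coeff j g = 0) :
    g ^ q = PSsubst (((PowerSeries.X : PowerSeries K) ^ q : PowerSeries K) :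
      MvPowerSeries Unit K) g := by
  have hq1 : 1 ≤ q := by rw [← hcard]; exact Fintype.card_pos
  set r := ringChar K with hrdef
  have hrp : r.Prime := CharP.char_is_prime K r
  obtain ⟨m, _, hqm⟩ := FiniteField.card K r
  have hq : q = r ^ (m : ℕ) := by rw [← hcard, hqm]
  have hXq0 : MvPowerSeries.constantCoeff (σ := Unit) (R := K)
      (((PowerSeries.X : PowerSeries K) ^ q : PowerSeries K) : MvPowerSeries Unit K) = 0 := by
    rw [← PS_constantCoeff_eq, map_pow, PowerSeries.constantCoeff_X, zero_pow (by omega)]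
  have hgsum : g = ∑ k ∈ range B, PowerSeries.monomial k (PowerSeries.coeff k g) := by
    ext j
    rw [map_sum]
    rw [Finset.sum_congr rfl fun k _ => PowerSeries.coeff_monomial j k _]
    rw [Finset.sum_ite_eq (range B) j (fun k => PowerSeries.coeff k g)]
    by_cases hj : j ∈ range B
    · rw [if_pos hj]
    · rw [if_neg hj]
      exact hB j (by simpa using hj)
  haveI : CharP (PowerSeries K) r :=
    charP_of_injective_ringHom (f := PowerSeries.C (R := K))
      (fun a b hab => by simpa using congrArg (PowerSeries.constantCoeff (R := K)) hab) r
  haveI : ExpChar (PowerSeries K) r := ExpChar.prime hrp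
  have hmono : ∀ k (c : K), (PowerSeries.monomial k c) ^ q =
      PowerSeries.monomial (q * k) c := by
    intro k c
    have hc : c ^ q = c := by rw [← hcard]; exact FiniteField.pow_card c
    rw [← monomial_smul_Xpow k c, smul_pow, ← pow_mul, mul_comm k q, hc,
      monomial_smul_Xpow]
  have hL : g ^ q = ∑ k ∈ range B, PowerSeries.monomial (q * k)
      (PowerSeries.coeff k g) := by
    conv_lhs => rw [hgsum]
    calc (∑ k ∈ range B, PowerSeries.monomial k (PowerSeries.coeff k g)) ^ q
        = (∑ k ∈ range B, PowerSeries.monomial k (PowerSeries.coeff k g)) ^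
            (r ^ (m : ℕ)) := by rw [← hq]
      _ = ∑ k ∈ range B, (PowerSeries.monomial k (PowerSeries.coeff k g)) ^
            (r ^ (m : ℕ)) :=
          sum_pow_char_pow (R := PowerSeries K) (p := r) (n := (m : ℕ)) _ _
      _ = ∑ k ∈ range B, (PowerSeries.monomial k (PowerSeries.coeff k g)) ^ q := by
          rw [← hq]
      _ = ∑ k ∈ range B, PowerSeries.monomial (q * k) (PowerSeries.coeff k g) :=
          Finset.sum_congr rfl fun k _ => hmono k _
  have hR : PSsubst (((PowerSeries.X : PowerSeries K) ^ q : PowerSeries K) :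
      MvPowerSeries Unit K) g = ∑ k ∈ range B,
        ((PowerSeries.monomial (q * k) (PowerSeries.coeff k g) : PowerSeries K) :
          MvPowerSeries Unit K) := by
    conv_lhs => rw [hgsum]
    rw [PSsubst_sum]
    refine Finset.sum_congr rfl fun k _ => ?_
    rw [PSsubst_monomial hXq0]
    show (PowerSeries.coeff k g) •
        ((((PowerSeries.X : PowerSeries K) ^ q : PowerSeries K) ^ k : PowerSeries K)) =
      PowerSeries.monomial (q * k) (PowerSeries.coeff k g)
    rw [← pow_mul, monomial_smul_Xpow]
  exact hL.trans hR.symm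

lemma frob_main [IsLocalRing R] {q : ℕ} [Finite (IsLocalRing.ResidueField R)]
    (hq : Nat.card (IsLocalRing.ResidueField R) = q) :
    ∀ ψ : PowerSeries R, (∃ B, ∀ j, B ≤ j → PowerSeries.coeff j ψ = 0) → ∀ i,
      PowerSeries.coeff i (ψ ^ q) - PowerSeries.coeff i
        (PSsubst (((PowerSeries.X : PowerSeries R) ^ q : PowerSeries R) :
          MvPowerSeries Unit R) ψ) ∈ IsLocalRing.maximalIdeal R := by
  rintro ψ ⟨B, hB⟩ i
  haveI : Fintype (IsLocalRing.ResidueField R) := Fintype.ofFinite _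
  have hcard : Fintype.card (IsLocalRing.ResidueField R) = q := by
    rw [← Nat.card_eq_fintype_card]; exact hq
  set ρ : R →+* IsLocalRing.ResidueField R := IsLocalRing.residue R with hρdef
  rw [← IsLocalRing.residue_eq_zero_iff]
  have hmapB : ∀ j, B ≤ j → PowerSeries.coeff j (PowerSeries.map ρ ψ) = 0 := by
    intro j hj
    rw [PowerSeries.coeff_map, hB j hj, map_zero]
  have hfrobK := frob_ps hcard hmapB
  have h1 : ρ (PowerSeries.coeff i (ψ ^ q)) =
      PowerSeries.coeff i ((PowerSeries.map ρ ψ) ^ q) := by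
    rw [← map_pow, PowerSeries.coeff_map]
  have h2 : ρ (PowerSeries.coeff i (PSsubst (((PowerSeries.X : PowerSeries R) ^ q :
      PowerSeries R) : MvPowerSeries Unit R) ψ)) =
      PowerSeries.coeff i (PSsubst (((PowerSeries.X : PowerSeries _) ^ q :
        PowerSeries _) : MvPowerSeries Unit _) (PowerSeries.map ρ ψ)) := by
    have hXmap : PowerSeries.map ρ ((PowerSeries.X : PowerSeries R) ^ q) =
        (PowerSeries.X : PowerSeries (IsLocalRing.ResidueField R)) ^ q := by
      rw [map_pow, PowerSeries.map_X]
    rw [← hXmap]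
    exact (PSsubst_map_coeff ρ (PowerSeries.X ^ q) ψ i).symm
  rw [map_sub, h1, h2, hfrobK, sub_self]

end LT
/-- for every `f ∈ F_π` and `a ∈ 𝒪_M` there is a unique `[a]_f ∈ 𝒪_M⟦X⟧` with
`[a]_f ≡ aX mod degree 2` commuting with `f` under composition; moreover `[a]_f` is an
endomorphism of the Lubin-Tate formal group law `F_f`. -/
theorem statement2 (p : ℕ) [Fact p.Prime] (M : Type*) [Field M] [Algebra ℚ_[p] M]
    [FiniteDimensional ℚ_[p] M] [IsLocalRing (integralClosure ℤ_[p] M)]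
    (q : ℕ) (hq : Nat.card (IsLocalRing.ResidueField (integralClosure ℤ_[p] M)) = q)
    (π : integralClosure ℤ_[p] M)
    (hπ : IsLocalRing.maximalIdeal (integralClosure ℤ_[p] M) = Ideal.span {π})
    (f : PowerSeries (integralClosure ℤ_[p] M))
    (hf : IsLubinTateSeries (IsLocalRing.maximalIdeal (integralClosure ℤ_[p] M)) π q f)
    (F : MvPowerSeries (Fin 2) (integralClosure ℤ_[p] M))
    (hFf : IsFormalGroupLaw F ∧ IsEndoOf f F)
    (a : integralClosure ℤ_[p] M) :
    (∃! h : PowerSeries (integralClosure ℤ_[p] M), IsLTBracket f a h) ∧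
    (∀ h : PowerSeries (integralClosure ℤ_[p] M), IsLTBracket f a h → IsEndoOf h F) := by
  classical
  obtain ⟨hFgl, hFendo⟩ := hFf
  obtain ⟨hF0, hFl, hFr, -, -⟩ := hFgl
  obtain ⟨hf0, hf1, hfq⟩ := hf
  -- q is nonzero
  have hq0 : q ≠ 0 := by
    intro h0
    subst h0
    have h := hfq 0
    rw [pow_zero, PowerSeries.coeff_zero_eq_constantCoeff, hf0, map_one, zero_sub] at h
    have h1 : (1 : integralClosure ℤ_[p] M) ∈
        IsLocalRing.maximalIdeal (integralClosure ℤ_[p] M) := by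
      simpa using (IsLocalRing.maximalIdeal (integralClosure ℤ_[p] M)).neg_mem h
    exact (IsLocalRing.maximalIdeal.isMaximal _).ne_top ((Ideal.eq_top_iff_one _).2 h1)
  have hq1 : 1 ≤ q := by omega
  haveI hfin : Finite (IsLocalRing.ResidueField (integralClosure ℤ_[p] M)) :=
    Nat.finite_of_card_ne_zero (by rw [hq]; exact hq0)
  haveI : CharZero M := charZero_of_injective_algebraMap (algebraMap ℚ_[p] M).injective
  haveI : CharZero (integralClosure ℤ_[p] M) := by infer_instance
  have hπ0 : π ≠ 0 := by
    intro h0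
    subst h0
    have hbot : IsLocalRing.maximalIdeal (integralClosure ℤ_[p] M) = ⊥ := by
      rw [hπ]
      exact Ideal.span_singleton_eq_bot.2 rfl
    have hinj : Function.Injective (IsLocalRing.residue (integralClosure ℤ_[p] M)) := by
      intro x y hxy
      have hz : IsLocalRing.residue (integralClosure ℤ_[p] M) (x - y) = 0 := by
        rw [map_sub, hxy, sub_self]
      rw [IsLocalRing.residue_eq_zero_iff, hbot, Ideal.mem_bot] at hz
      exact sub_eq_zero.1 hz
    have : Finite (integralClosure ℤ_[p] M) := Finite.of_injective _ hinj
    exact not_finite (integralClosure ℤ_[p] M)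
  have hπm : π ∈ IsLocalRing.maximalIdeal (integralClosure ℤ_[p] M) := by
    rw [hπ]
    exact Ideal.mem_span_singleton_self π
  have hfrob := LT.frob_main (R := integralClosure ℤ_[p] M) hq
  constructor
  · obtain ⟨h, hbr⟩ := LT.LT_exists hπ hq1 hfrob hf0 hf1 hfq a
    exact ⟨h, hbr, fun y hy => LT.LT_unique hπ0 hπm hf0 hf1 hy hbr⟩
  · intro h hbr
    exact LT.LT_endo hπ0 hπm hf0 hf1 hF0 hFl hFr hFendo hbr
end

section
/- Let L be a finite extension of K = 𝔽_q((T)) contained in K^sep (so L is complete for v). For every a ∈ L with v(a) > 1/(q−1), the sequence (T^{−n}·ϕ_{T^n}(a))_{n≥0} converges in L; denoting its limit λ(a), the resulting map λ is 𝔽_q-linear on its domain and satisfies λ(ϕ_b(a)) = b·λ(a) for every b ∈ A. -/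
open scoped Classical

noncomputable section

/-- The variable `T` of `K = 𝔽_q((T))`, as a Laurent series. -/
def Tvar (Fq : Type*) [Field Fq] : LaurentSeries Fq :=
  algebraMap (PowerSeries Fq) (LaurentSeries Fq) PowerSeries.X

variable {Fq : Type*} [Field Fq] {Ksep : Type*} [Field Ksep]
  [Algebra (LaurentSeries Fq) Ksep]

/-- `K^sep` is an algebra over `𝒪_K = 𝔽_q⟦T⟧`. -/
noncomputable instance algebraPSKsep : Algebra (PowerSeries Fq) Ksep :=
  ((algebraMap (LaurentSeries Fq) Ksep).comp
    (algebraMap (PowerSeries Fq) (LaurentSeries Fq))).toAlgebra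

instance towerPSKsep : IsScalarTower (PowerSeries Fq) (LaurentSeries Fq) Ksep :=
  IsScalarTower.of_algebraMap_eq fun _ => rfl

/-- Intermediate fields of `K^sep/K` are `K`-algebras. -/
noncomputable instance algebraKE (E : IntermediateField (LaurentSeries Fq) Ksep) :
    Algebra (LaurentSeries Fq) E :=
  inferInstanceAs (Algebra (LaurentSeries Fq) E.toSubalgebra)

/-- Intermediate fields of `K^sep/K` are `𝒪_K`-algebras. -/
noncomputable instance algebraPSE (E : IntermediateField (LaurentSeries Fq) Ksep) :
    Algebra (PowerSeries Fq) E :=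
  ((algebraMap (LaurentSeries Fq) E).comp
    (algebraMap (PowerSeries Fq) (LaurentSeries Fq))).toAlgebra

instance towerPSE (E : IntermediateField (LaurentSeries Fq) Ksep) :
    IsScalarTower (PowerSeries Fq) (LaurentSeries Fq) E :=
  IsScalarTower.of_algebraMap_eq fun _ => rfl

/-- The properties characterising the Carlitz module `a ↦ ϕ_a`: the unique `𝔽_q`-algebra
homomorphism from `A = 𝔽_q[T]` to the ring (under composition) of `𝔽_q`-linear additive
polynomials with `ϕ_T(X) = TX + X^q` (the algebra structure map sends `c ∈ 𝔽_q` to `cX`). -/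
structure IsCarlitz {Fq : Type*} [Field Fq] (q : ℕ)
    (ϕ : Polynomial Fq → Polynomial (LaurentSeries Fq)) : Prop where
  map_add' : ∀ a b, ϕ (a + b) = ϕ a + ϕ b
  map_mul' : ∀ a b, ϕ (a * b) = (ϕ a).comp (ϕ b)
  map_const' : ∀ c : Fq, ϕ (Polynomial.C c) =
    Polynomial.C (algebraMap Fq (LaurentSeries Fq) c) * Polynomial.X
  map_T' : ϕ Polynomial.X = Polynomial.C (Tvar Fq) * Polynomial.X + Polynomial.X ^ q

/-- The properties characterising the (unique) extension `v` to `K^sep` of the `T`-adic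
valuation of `K = 𝔽_q((T))`, normalised by `v(T) = 1`, with the convention `v(0) = +∞`. -/
structure IsTAdicValuation (Fq : Type*) [Field Fq] {Ksep : Type*} [Field Ksep]
    [Algebra (LaurentSeries Fq) Ksep] (v : Ksep → WithTop ℝ) : Prop where
  eq_top_iff' : ∀ x, v x = ⊤ ↔ x = 0
  map_mul' : ∀ x y, v (x * y) = v x + v y
  min_le_add' : ∀ x y, min (v x) (v y) ≤ v (x + y)
  restrict' : ∀ x : LaurentSeries Fq, x ≠ 0 →
    v (algebraMap (LaurentSeries Fq) Ksep x) = ((x.order : ℝ) : WithTop ℝ)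

/-- Convergence of a sequence with respect to an (additive, `WithTop ℝ`-valued) valuation. -/
def VTendsto {Ksep : Type*} [Field Ksep] (v : Ksep → WithTop ℝ) (s : ℕ → Ksep) (l : Ksep) :
    Prop :=
  ∀ C : ℝ, ∃ N : ℕ, ∀ n ≥ N, (C : WithTop ℝ) < v (s n - l)

/-- The sequence `T^{-n}·ϕ_{T^n}(x)` whose limit is the Carlitz logarithm `λ(x)`. -/
def carlitzLogSeq {Fq : Type*} [Field Fq] {Ksep : Type*} [Field Ksep]
    [Algebra (LaurentSeries Fq) Ksep] (ϕ : Polynomial Fq → Polynomial (LaurentSeries Fq))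
    (x : Ksep) (n : ℕ) : Ksep :=
  (algebraMap (LaurentSeries Fq) Ksep (Tvar Fq))⁻¹ ^ n *
    Polynomial.aeval x (ϕ (Polynomial.X ^ n))

/-! ### Auxiliary lemmas -/

section Aux

variable {v : Ksep → WithTop ℝ}

theorem aux_v_zero (hv : IsTAdicValuation Fq v) : v 0 = ⊤ := (hv.eq_top_iff' 0).2 rfl

theorem aux_v_ne_top (hv : IsTAdicValuation Fq v) {x : Ksep} (hx : x ≠ 0) : v x ≠ ⊤ :=
  fun h => hx ((hv.eq_top_iff' x).1 h)

theorem aux_v_one (hv : IsTAdicValuation Fq v) : v 1 = 0 := by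
  have h := hv.map_mul' 1 1
  rw [mul_one] at h
  obtain ⟨r, hr⟩ := WithTop.ne_top_iff_exists.1 (aux_v_ne_top hv (one_ne_zero : (1:Ksep) ≠ 0))
  rw [← hr] at h ⊢
  rw [← WithTop.coe_add, WithTop.coe_eq_coe] at h
  have : r = 0 := by linarith
  simp [this]

theorem aux_v_neg (hv : IsTAdicValuation Fq v) (x : Ksep) : v (-x) = v x := by
  have h1 : v (-1 : Ksep) = 0 := by
    have h := hv.map_mul' (-1) (-1)
    rw [neg_mul_neg, one_mul, aux_v_one hv] at h
    obtain ⟨r, hr⟩ := WithTop.ne_top_iff_exists.1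
      (aux_v_ne_top hv (neg_ne_zero.2 (one_ne_zero : (1:Ksep) ≠ 0)))
    rw [← hr] at h ⊢
    have hr0 : (0:ℝ) = r + r := by exact_mod_cast h
    have : r = 0 := by linarith
    simp [this]
  have := hv.map_mul' (-1) x
  rw [neg_one_mul, h1, zero_add] at this
  exact this

theorem aux_v_sub_rev (hv : IsTAdicValuation Fq v) (x y : Ksep) : v (x - y) = v (y - x) := by
  rw [← aux_v_neg hv (x - y), neg_sub]

theorem aux_v_add_eq_left (hv : IsTAdicValuation Fq v) {x y : Ksep} (h : v x < v y) :
    v (x + y) = v x := by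
  refine le_antisymm ?_ ?_
  · by_contra hlt
    push_neg at hlt
    have h2 := hv.min_le_add' (x + y) (-y)
    rw [add_neg_cancel_right, aux_v_neg hv] at h2
    exact absurd (lt_of_lt_of_le (lt_min hlt h) h2) (lt_irrefl _)
  · calc v x = min (v x) (v y) := (min_eq_left h.le).symm
      _ ≤ v (x + y) := hv.min_le_add' x y

theorem aux_v_pow (hv : IsTAdicValuation Fq v) {x : Ksep} {r : ℝ} (hx : v x = (r : ℝ)) :
    ∀ n : ℕ, v (x ^ n) = (((n : ℝ) * r : ℝ) : WithTop ℝ) := by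
  intro n
  induction n with
  | zero => simp [aux_v_one hv]
  | succ n ih =>
    rw [pow_succ, hv.map_mul', ih, hx, ← WithTop.coe_add, WithTop.coe_eq_coe]
    push_cast
    ring

theorem aux_Tvar_ne_zero : Tvar Fq ≠ 0 := by
  have h : Tvar Fq = HahnSeries.single (1 : ℤ) (1 : Fq) := by
    rw [Tvar, show algebraMap (PowerSeries Fq) (LaurentSeries Fq) PowerSeries.X =
      HahnSeries.ofPowerSeries ℤ Fq PowerSeries.X from congrFun LaurentSeries.coe_algebraMap _,
      HahnSeries.ofPowerSeries_X]
  rw [h]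
  exact HahnSeries.single_ne_zero one_ne_zero

theorem aux_Ti_ne_zero : algebraMap (LaurentSeries Fq) Ksep (Tvar Fq) ≠ 0 := by
  simpa using (map_ne_zero (algebraMap (LaurentSeries Fq) Ksep)).2 aux_Tvar_ne_zero

theorem aux_v_Ti (hv : IsTAdicValuation Fq v) :
    v (algebraMap (LaurentSeries Fq) Ksep (Tvar Fq)) = ((1 : ℝ) : WithTop ℝ) := by
  have h : Tvar Fq = HahnSeries.single (1 : ℤ) (1 : Fq) := by
    rw [Tvar, show algebraMap (PowerSeries Fq) (LaurentSeries Fq) PowerSeries.X =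
      HahnSeries.ofPowerSeries ℤ Fq PowerSeries.X from congrFun LaurentSeries.coe_algebraMap _,
      HahnSeries.ofPowerSeries_X]
  rw [hv.restrict' _ aux_Tvar_ne_zero, h, HahnSeries.order_single one_ne_zero]
  norm_num

theorem aux_v_Ti_inv (hv : IsTAdicValuation Fq v) :
    v (algebraMap (LaurentSeries Fq) Ksep (Tvar Fq))⁻¹ = ((-1 : ℝ) : WithTop ℝ) := by
  set Ti := algebraMap (LaurentSeries Fq) Ksep (Tvar Fq)
  have hTi : Ti ≠ 0 := aux_Ti_ne_zero
  have h := hv.map_mul' Ti Ti⁻¹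
  rw [mul_inv_cancel₀ hTi, aux_v_one hv, aux_v_Ti hv] at h
  obtain ⟨r, hr⟩ := WithTop.ne_top_iff_exists.1 (aux_v_ne_top hv (inv_ne_zero hTi))
  rw [← hr] at h ⊢
  have hr0 : (0:ℝ) = 1 + r := by exact_mod_cast h
  rw [WithTop.coe_eq_coe]
  linarith

theorem aux_v_Ti_inv_pow (hv : IsTAdicValuation Fq v) (n : ℕ) :
    v ((algebraMap (LaurentSeries Fq) Ksep (Tvar Fq))⁻¹ ^ n) = ((-(n : ℝ) : ℝ) : WithTop ℝ) := by
  rw [aux_v_pow hv (aux_v_Ti_inv hv) n]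
  norm_num

/-! Limit arithmetic -/

theorem aux_vtendsto_unique (hv : IsTAdicValuation Fq v) {s : ℕ → Ksep} {l l' : Ksep}
    (h : VTendsto v s l) (h' : VTendsto v s l') : l = l' := by
  by_contra hne
  have hvne : v (l' - l) ≠ ⊤ := aux_v_ne_top hv (sub_ne_zero.2 (Ne.symm hne))
  obtain ⟨r, hr⟩ := WithTop.ne_top_iff_exists.1 hvne
  obtain ⟨N1, hN1⟩ := h r
  obtain ⟨N2, hN2⟩ := h' r
  set n := max N1 N2
  have key : (r : WithTop ℝ) < v (l' - l) := by
    have heq : l' - l = (s n - l) + (-(s n - l')) := by ring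
    rw [heq]
    refine lt_of_lt_of_le ?_ (hv.min_le_add' _ _)
    rw [aux_v_neg hv]
    exact lt_min (hN1 n (le_max_left _ _)) (hN2 n (le_max_right _ _))
  rw [← hr] at key
  exact absurd key (lt_irrefl _)

theorem aux_vtendsto_add (hv : IsTAdicValuation Fq v) {s t : ℕ → Ksep} {ls lt : Ksep}
    (h : VTendsto v s ls) (h' : VTendsto v t lt) :
    VTendsto v (fun n => s n + t n) (ls + lt) := by
  intro C
  obtain ⟨N1, hN1⟩ := h C
  obtain ⟨N2, hN2⟩ := h' C
  refine ⟨max N1 N2, fun n hn => ?_⟩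
  have heq : s n + t n - (ls + lt) = (s n - ls) + (t n - lt) := by ring
  rw [heq]
  refine lt_of_lt_of_le ?_ (hv.min_le_add' _ _)
  exact lt_min (hN1 n (le_trans (le_max_left _ _) hn)) (hN2 n (le_trans (le_max_right _ _) hn))

theorem aux_vtendsto_const_mul (hv : IsTAdicValuation Fq v) (c : Ksep) {s : ℕ → Ksep} {l : Ksep}
    (h : VTendsto v s l) : VTendsto v (fun n => c * s n) (c * l) := by
  by_cases hc : c = 0
  · intro C
    refine ⟨0, fun n _ => ?_⟩
    simp [hc, aux_v_zero hv]
  · obtain ⟨r, hr⟩ := WithTop.ne_top_iff_exists.1 (aux_v_ne_top hv hc)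
    intro C
    obtain ⟨N, hN⟩ := h (C - r)
    refine ⟨N, fun n hn => ?_⟩
    have heq : c * s n - c * l = c * (s n - l) := by ring
    rw [heq, hv.map_mul', ← hr]
    have h2 := hN n hn
    rcases eq_or_ne (v (s n - l)) ⊤ with ht | ht
    · rw [ht]
      simp
    · obtain ⟨t, htt⟩ := WithTop.ne_top_iff_exists.1 ht
      rw [← htt] at h2 ⊢
      rw [WithTop.coe_lt_coe] at h2
      rw [← WithTop.coe_add, WithTop.coe_lt_coe]
      linarith

theorem aux_vtendsto_shift (v : Ksep → WithTop ℝ) {s : ℕ → Ksep} {l : Ksep}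
    (h : VTendsto v s l) (i : ℕ) : VTendsto v (fun n => s (n + i)) l := by
  intro C
  obtain ⟨N, hN⟩ := h C
  exact ⟨N, fun n hn => hN (n + i) (le_trans hn (Nat.le_add_right n i))⟩

theorem aux_vtendsto_sum (hv : IsTAdicValuation Fq v) {ι : Type*} (t : Finset ι)
    (s : ι → ℕ → Ksep) (l : ι → Ksep) (h : ∀ i ∈ t, VTendsto v (s i) (l i)) :
    VTendsto v (fun n => ∑ i ∈ t, s i n) (∑ i ∈ t, l i) := by
  induction t using Finset.induction_on with
  | empty =>
    intro C
    refine ⟨0, fun n _ => ?_⟩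
    simp [aux_v_zero hv]
  | @insert a t ha ih =>
    have h1 := aux_vtendsto_add hv (h a (Finset.mem_insert_self a t))
      (ih fun i hi => h i (Finset.mem_insert_of_mem hi))
    rw [Finset.sum_insert ha]
    convert h1 using 2 with n
    rw [Finset.sum_insert ha]

end Aux

/-! ### Carlitz module algebraic lemmas -/

section Carlitz

variable {q : ℕ} {ϕ : Polynomial Fq → Polynomial (LaurentSeries Fq)}

theorem aux_phi_zero (hϕ : IsCarlitz q ϕ) : ϕ 0 = 0 := by
  have := hϕ.map_add' 0 0
  rw [add_zero] at this
  exact left_eq_add.1 this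

theorem aux_phi_one (hϕ : IsCarlitz q ϕ) : ϕ 1 = Polynomial.X := by
  simpa using hϕ.map_const' 1

theorem aux_aeval_phi_mul (hϕ : IsCarlitz q ϕ) (a b : Polynomial Fq) (x : Ksep) :
    Polynomial.aeval x (ϕ (a * b)) = Polynomial.aeval (Polynomial.aeval x (ϕ b)) (ϕ a) := by
  rw [hϕ.map_mul', Polynomial.aeval_comp]

theorem aux_aeval_phi_C (hϕ : IsCarlitz q ϕ) (c : Fq) (x : Ksep) :
    Polynomial.aeval x (ϕ (Polynomial.C c)) =
      algebraMap (LaurentSeries Fq) Ksep (algebraMap Fq (LaurentSeries Fq) c) * x := by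
  rw [hϕ.map_const']
  simp

theorem aux_aeval_phi_X (hϕ : IsCarlitz q ϕ) (x : Ksep) :
    Polynomial.aeval x (ϕ Polynomial.X) =
      algebraMap (LaurentSeries Fq) Ksep (Tvar Fq) * x + x ^ q := by
  rw [hϕ.map_T']
  simp

theorem aux_phi_pow_additive [Fintype Fq] (hq : Fintype.card Fq = q) (hϕ : IsCarlitz q ϕ)
    (n : ℕ) (x y : Ksep) :
    Polynomial.aeval (x + y) (ϕ (Polynomial.X ^ n)) =
      Polynomial.aeval x (ϕ (Polynomial.X ^ n)) + Polynomial.aeval y (ϕ (Polynomial.X ^ n)) := by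
  haveI : CharP Fq (ringChar Fq) := ringChar.charP Fq
  obtain ⟨k, hp, hcard⟩ := FiniteField.card Fq (ringChar Fq)
  haveI : Fact (Nat.Prime (ringChar Fq)) := ⟨hp⟩
  haveI : CharP (LaurentSeries Fq) (ringChar Fq) :=
    charP_of_injective_algebraMap (algebraMap Fq (LaurentSeries Fq)).injective _
  haveI : CharP Ksep (ringChar Fq) :=
    charP_of_injective_algebraMap (algebraMap (LaurentSeries Fq) Ksep).injective _
  have hqpk : q = ringChar Fq ^ (k : ℕ) := by rw [← hq, hcard]
  induction n generalizing x y with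
  | zero =>
    simp [pow_zero, aux_phi_one hϕ]
  | succ n ih =>
    rw [pow_succ', aux_aeval_phi_mul hϕ, aux_aeval_phi_mul hϕ, aux_aeval_phi_mul hϕ,
      aux_aeval_phi_X hϕ, aux_aeval_phi_X hϕ, aux_aeval_phi_X hϕ, ih x y]
    have hfrob : ∀ a b : Ksep, (a + b) ^ q = a ^ q + b ^ q := fun a b => by
      rw [hqpk]; exact add_pow_char_pow a b (ringChar Fq) (k : ℕ)
    rw [hfrob]
    ring

theorem aux_phi_pow_zero [Fintype Fq] (hq : Fintype.card Fq = q) (hϕ : IsCarlitz q ϕ) (n : ℕ) :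
    Polynomial.aeval (0 : Ksep) (ϕ (Polynomial.X ^ n)) = 0 := by
  have := aux_phi_pow_additive hq hϕ n (0 : Ksep) 0
  rw [add_zero] at this
  exact left_eq_add.1 this

theorem aux_phi_pow_smul (hϕ : IsCarlitz q ϕ) (n : ℕ) (c : Fq) (x : Ksep) :
    Polynomial.aeval
        (algebraMap (LaurentSeries Fq) Ksep (algebraMap Fq (LaurentSeries Fq) c) * x)
        (ϕ (Polynomial.X ^ n)) =
      algebraMap (LaurentSeries Fq) Ksep (algebraMap Fq (LaurentSeries Fq) c) *
        Polynomial.aeval x (ϕ (Polynomial.X ^ n)) := by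
  have h1 : algebraMap (LaurentSeries Fq) Ksep (algebraMap Fq (LaurentSeries Fq) c) * x =
      Polynomial.aeval x (ϕ (Polynomial.C c)) := (aux_aeval_phi_C hϕ c x).symm
  rw [h1, ← aux_aeval_phi_mul hϕ, ← mul_comm (Polynomial.C c), aux_aeval_phi_mul hϕ,
    aux_aeval_phi_C hϕ]

theorem aux_v_u [Fintype Fq] (hq : Fintype.card Fq = q) (hϕ : IsCarlitz q ϕ)
    {v : Ksep → WithTop ℝ} (hv : IsTAdicValuation Fq v) (hq2 : 2 ≤ q)
    {x : Ksep} {w : ℝ} (hw : v x = (w : ℝ)) (hwgt : 1 / ((q : ℝ) - 1) < w) :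
    ∀ n : ℕ, v (Polynomial.aeval x (ϕ (Polynomial.X ^ n))) = (((n : ℝ) + w : ℝ) : WithTop ℝ) := by
  have hq1 : (0 : ℝ) < (q : ℝ) - 1 := by
    have : (2 : ℝ) ≤ (q : ℝ) := by exact_mod_cast hq2
    linarith
  have hw1 : 1 < w * ((q : ℝ) - 1) := (div_lt_iff₀ hq1).1 hwgt
  intro n
  induction n with
  | zero => simpa [pow_zero, aux_phi_one hϕ] using hw
  | succ n ih =>
    rw [pow_succ', aux_aeval_phi_mul hϕ, aux_aeval_phi_X hϕ]
    set u := Polynomial.aeval x (ϕ (Polynomial.X ^ n))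
    have hTu : v (algebraMap (LaurentSeries Fq) Ksep (Tvar Fq) * u) =
        ((1 + ((n : ℝ) + w) : ℝ) : WithTop ℝ) := by
      rw [hv.map_mul', aux_v_Ti hv, ih, ← WithTop.coe_add]
    have huq : v (u ^ q) = (((q : ℝ) * ((n : ℝ) + w) : ℝ) : WithTop ℝ) := aux_v_pow hv ih q
    have hlt : v (algebraMap (LaurentSeries Fq) Ksep (Tvar Fq) * u) < v (u ^ q) := by
      rw [hTu, huq, WithTop.coe_lt_coe]
      have hn0 : (0 : ℝ) ≤ (n : ℝ) := Nat.cast_nonneg n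
      nlinarith
    rw [aux_v_add_eq_left hv hlt, hTu, WithTop.coe_eq_coe]
    push_cast
    ring

end Carlitz

/-- for `L/K` finite and complete inside `K^sep`, and `a ∈ L` with
`v(a) > 1/(q-1)`, the sequence `T^{-n}·ϕ_{T^n}(a)` converges in `L`; the limit function `λ`
is `𝔽_q`-linear on its domain and satisfies `λ(ϕ_b(a)) = b·λ(a)` for all `b ∈ A`. -/
theorem statement14 [Fintype Fq] (q : ℕ) (hq : Fintype.card Fq = q)
    [IsSepClosure (LaurentSeries Fq) Ksep]
    (ϕ : Polynomial Fq → Polynomial (LaurentSeries Fq)) (hϕ : IsCarlitz q ϕ)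
    (v : Ksep → WithTop ℝ) (hv : IsTAdicValuation Fq v)
    (L : IntermediateField (LaurentSeries Fq) Ksep)
    [FiniteDimensional (LaurentSeries Fq) L]
    (hcomplete : ∀ s : ℕ → L,
      (∀ C : ℝ, ∃ N : ℕ, ∀ i ≥ N, ∀ j ≥ N, (C : WithTop ℝ) < v ((s i : Ksep) - (s j : Ksep))) →
      ∃ l : L, VTendsto v (fun n => (s n : Ksep)) (l : Ksep)) :
    (∀ a : L, ((1 / ((q : ℝ) - 1) : ℝ) : WithTop ℝ) < v (a : Ksep) →
      ∃ l : L, VTendsto v (carlitzLogSeq ϕ (a : Ksep)) (l : Ksep)) ∧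
    (∀ a b : L, ((1 / ((q : ℝ) - 1) : ℝ) : WithTop ℝ) < v (a : Ksep) →
      ((1 / ((q : ℝ) - 1) : ℝ) : WithTop ℝ) < v (b : Ksep) →
      ∀ la lb lab : Ksep, VTendsto v (carlitzLogSeq ϕ (a : Ksep)) la →
        VTendsto v (carlitzLogSeq ϕ (b : Ksep)) lb →
        VTendsto v (carlitzLogSeq ϕ ((a : Ksep) + (b : Ksep))) lab →
        lab = la + lb) ∧
    (∀ (c : Fq) (a : L), ((1 / ((q : ℝ) - 1) : ℝ) : WithTop ℝ) < v (a : Ksep) →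
      ∀ la lc : Ksep, VTendsto v (carlitzLogSeq ϕ (a : Ksep)) la →
        VTendsto v (carlitzLogSeq ϕ
          (algebraMap (LaurentSeries Fq) Ksep (algebraMap Fq (LaurentSeries Fq) c) *
            (a : Ksep))) lc →
        lc = algebraMap (LaurentSeries Fq) Ksep (algebraMap Fq (LaurentSeries Fq) c) * la) ∧
    (∀ (b : Polynomial Fq) (a : L), ((1 / ((q : ℝ) - 1) : ℝ) : WithTop ℝ) < v (a : Ksep) →
      ∀ la lb : Ksep, VTendsto v (carlitzLogSeq ϕ (a : Ksep)) la →
        VTendsto v (carlitzLogSeq ϕ (Polynomial.aeval ((a : Ksep)) (ϕ b))) lb →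
        lb = algebraMap (LaurentSeries Fq) Ksep (Polynomial.aeval (Tvar Fq) b) * la) := by
  have hq2 : 1 < q := hq ▸ Fintype.one_lt_card
  have hq1 : (0 : ℝ) < (q : ℝ) - 1 := by
    have : (2 : ℝ) ≤ (q : ℝ) := by exact_mod_cast hq2
    linarith
  set Ti : Ksep := algebraMap (LaurentSeries Fq) Ksep (Tvar Fq) with hTidef
  have hTi : Ti ≠ 0 := aux_Ti_ne_zero
  refine ⟨?_, ?_, ?_, ?_⟩
  · -- existence
    intro a ha
    by_cases h0 : (a : Ksep) = 0
    · refine ⟨0, fun C => ⟨0, fun n _ => ?_⟩⟩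
      have h1 : carlitzLogSeq ϕ ((a : Ksep)) n - (((0:L) : Ksep)) = 0 := by
        rw [h0, carlitzLogSeq, aux_phi_pow_zero hq hϕ n, mul_zero]
        simp
      rw [h1, aux_v_zero hv]
      exact WithTop.coe_lt_top C
    · obtain ⟨w, hw⟩ := WithTop.ne_top_iff_exists.1 (aux_v_ne_top hv h0)
      have hwgt : 1 / ((q : ℝ) - 1) < w := by
        rw [← hw] at ha
        exact_mod_cast ha
      have hvu := aux_v_u hq hϕ hv hq2 hw.symm hwgt
      set s : ℕ → Ksep := carlitzLogSeq ϕ (a : Ksep) with hs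
      set u : ℕ → Ksep := fun n => Polynomial.aeval (a : Ksep) (ϕ (Polynomial.X ^ n)) with hu
      -- the sequence lives in L
      set sL : ℕ → L := fun n =>
        (algebraMap (LaurentSeries Fq) L (Tvar Fq))⁻¹ ^ n *
          Polynomial.aeval a (ϕ (Polynomial.X ^ n)) with hsL
      have hkey : ∀ n, ((sL n : L) : Ksep) = s n := by
        intro n
        have h2 : algebraMap L Ksep (algebraMap (LaurentSeries Fq) L (Tvar Fq)) = Ti :=
          (IsScalarTower.algebraMap_apply (LaurentSeries Fq) L Ksep (Tvar Fq)).symm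
        have h3 : algebraMap L Ksep (Polynomial.aeval a (ϕ (Polynomial.X ^ n))) =
            Polynomial.aeval (algebraMap L Ksep a) (ϕ (Polynomial.X ^ n)) :=
          (Polynomial.aeval_algebraMap_apply Ksep a (ϕ (Polynomial.X ^ n))).symm
        show algebraMap L Ksep (sL n) = s n
        rw [hsL, hs]
        simp only []
        rw [map_mul, map_pow, map_inv₀, h2, h3, carlitzLogSeq]
        rfl
      -- the recurrence
      have hrec : ∀ n, u (n + 1) = Ti * u n + (u n) ^ q := by
        intro n
        show Polynomial.aeval (a : Ksep) (ϕ (Polynomial.X ^ (n + 1))) = Ti * u n + (u n) ^ q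
        rw [pow_succ', aux_aeval_phi_mul hϕ, aux_aeval_phi_X hϕ]
      have hdiff : ∀ n : ℕ, v (s (n + 1) - s n) =
          (((q : ℝ) * ((n : ℝ) + w) - ((n : ℝ) + 1) : ℝ) : WithTop ℝ) := by
        intro n
        have heq : s (n + 1) - s n = Ti⁻¹ ^ (n + 1) * (u n) ^ q := by
          rw [hs, carlitzLogSeq, carlitzLogSeq, ← hTidef]
          show Ti⁻¹ ^ (n + 1) * u (n + 1) - Ti⁻¹ ^ n * u n = Ti⁻¹ ^ (n + 1) * u n ^ q
          rw [hrec n]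
          have hcan : Ti⁻¹ ^ (n + 1) * Ti = Ti⁻¹ ^ n := by
            rw [pow_succ, mul_assoc, inv_mul_cancel₀ hTi, mul_one]
          calc Ti⁻¹ ^ (n + 1) * (Ti * u n + u n ^ q) - Ti⁻¹ ^ n * u n
              = (Ti⁻¹ ^ (n + 1) * Ti) * u n + Ti⁻¹ ^ (n + 1) * u n ^ q
                - Ti⁻¹ ^ n * u n := by ring
            _ = Ti⁻¹ ^ (n + 1) * u n ^ q := by rw [hcan]; ring
        rw [heq, hv.map_mul', aux_v_Ti_inv_pow hv, aux_v_pow hv (hvu n), ← WithTop.coe_add,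
          WithTop.coe_eq_coe]
        push_cast
        ring
      -- Cauchy
      have hcauchy : ∀ C : ℝ, ∃ N : ℕ, ∀ i ≥ N, ∀ j ≥ N,
          (C : WithTop ℝ) < v ((sL i : Ksep) - (sL j : Ksep)) := by
        intro C
        obtain ⟨N, hN⟩ := exists_nat_gt ((C + 1 - (q : ℝ) * w) / ((q : ℝ) - 1))
        have hbig : ∀ n : ℕ, n ≥ N →
            (C : WithTop ℝ) < v (s (n + 1) - s n) := by
          intro n hn
          rw [hdiff n, WithTop.coe_lt_coe]
          have hNn : (N : ℝ) ≤ (n : ℝ) := by exact_mod_cast hn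
          have h5 : C + 1 - (q : ℝ) * w < (N : ℝ) * ((q : ℝ) - 1) := (div_lt_iff₀ hq1).1 hN
          nlinarith
        have htel : ∀ i ≥ N, ∀ j, i ≤ j → (C : WithTop ℝ) < v (s j - s i) := by
          intro i hi j hij
          induction j, hij using Nat.le_induction with
          | base =>
            rw [sub_self, aux_v_zero hv]
            exact WithTop.coe_lt_top C
          | succ j hij ih =>
            have heq : s (j + 1) - s i = (s (j + 1) - s j) + (s j - s i) := by ring
            rw [heq]
            refine lt_of_lt_of_le ?_ (hv.min_le_add' _ _)
            exact lt_min (hbig j (le_trans hi hij)) ih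
        refine ⟨N, fun i hi j hj => ?_⟩
        rw [hkey i, hkey j]
        rcases le_total j i with h | h
        · exact htel j hj i h
        · rw [aux_v_sub_rev hv]
          exact htel i hi j h
      obtain ⟨l, hl⟩ := hcomplete sL hcauchy
      refine ⟨l, ?_⟩
      have : (fun n => ((sL n : L) : Ksep)) = s := funext hkey
      rw [hs] at this
      rw [hs, ← this]
      exact hl
  · -- additivity
    intro a b _ _ la lb lab hla hlb hlab
    have hpt : ∀ n, carlitzLogSeq ϕ ((a : Ksep) + (b : Ksep)) n =
        carlitzLogSeq ϕ (a : Ksep) n + carlitzLogSeq ϕ (b : Ksep) n := by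
      intro n
      rw [carlitzLogSeq, carlitzLogSeq, carlitzLogSeq, aux_phi_pow_additive hq hϕ]
      ring
    have h1 := aux_vtendsto_add hv hla hlb
    rw [show (fun n => carlitzLogSeq ϕ (a : Ksep) n + carlitzLogSeq ϕ (b : Ksep) n) =
      carlitzLogSeq ϕ ((a : Ksep) + (b : Ksep)) from funext fun n => (hpt n).symm] at h1
    exact aux_vtendsto_unique hv hlab h1
  · -- scalar multiplication
    intro c a _ la lc hla hlc
    set cK : Ksep := algebraMap (LaurentSeries Fq) Ksep (algebraMap Fq (LaurentSeries Fq) c)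
      with hcK
    have hpt : ∀ n, carlitzLogSeq ϕ (cK * (a : Ksep)) n =
        cK * carlitzLogSeq ϕ (a : Ksep) n := by
      intro n
      rw [carlitzLogSeq, carlitzLogSeq, hcK, aux_phi_pow_smul hϕ]
      ring
    have h1 := aux_vtendsto_const_mul hv cK hla
    rw [show (fun n => cK * carlitzLogSeq ϕ (a : Ksep) n) =
      carlitzLogSeq ϕ (cK * (a : Ksep)) from funext fun n => (hpt n).symm] at h1
    exact aux_vtendsto_unique hv hlc h1
  · -- A-semilinearity
    intro b a _ la lb hla hlb
    set x : Ksep := (a : Ksep) with hx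
    set s : ℕ → Ksep := carlitzLogSeq ϕ x with hs
    set u : ℕ → Ksep := fun n => Polynomial.aeval x (ϕ (Polynomial.X ^ n)) with hu
    set coef : ℕ → Ksep := fun i =>
      algebraMap (LaurentSeries Fq) Ksep (algebraMap Fq (LaurentSeries Fq) (b.coeff i)) * Ti ^ i
      with hcoef
    have Φ : ∃ Ψ : Polynomial Fq →+ Polynomial (LaurentSeries Fq), ∀ p, Ψ p = ϕ p :=
      ⟨AddMonoidHom.mk' ϕ hϕ.map_add', fun p => rfl⟩
    obtain ⟨Ψ, hΨ⟩ := Φ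
    have hpt : ∀ m, carlitzLogSeq ϕ (Polynomial.aeval x (ϕ b)) m =
        ∑ i ∈ b.support, coef i * s (m + i) := by
      intro m
      have hXb : (Polynomial.X : Polynomial Fq) ^ m * b =
          ∑ i ∈ b.support, Polynomial.C (b.coeff i) * Polynomial.X ^ (m + i) := by
        conv_lhs => rw [b.as_sum_support]
        rw [Finset.mul_sum]
        refine Finset.sum_congr rfl fun i _ => ?_
        rw [← Polynomial.C_mul_X_pow_eq_monomial]
        ring
      have hterm : ∀ i, Polynomial.aeval x (ϕ (Polynomial.C (b.coeff i) *
          Polynomial.X ^ (m + i))) =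
          algebraMap (LaurentSeries Fq) Ksep (algebraMap Fq (LaurentSeries Fq) (b.coeff i)) *
            u (m + i) := by
        intro i
        rw [aux_aeval_phi_mul hϕ, aux_aeval_phi_C hϕ]
      have hmain : carlitzLogSeq ϕ (Polynomial.aeval x (ϕ b)) m =
          Ti⁻¹ ^ m * ∑ i ∈ b.support,
            algebraMap (LaurentSeries Fq) Ksep (algebraMap Fq (LaurentSeries Fq) (b.coeff i)) *
              u (m + i) := by
        rw [carlitzLogSeq, ← hTidef, ← aux_aeval_phi_mul hϕ, hXb, ← hΨ, map_sum, map_sum]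
        congr 1
        refine Finset.sum_congr rfl fun i _ => ?_
        rw [hΨ]
        exact hterm i
      rw [hmain, Finset.mul_sum]
      refine Finset.sum_congr rfl fun i _ => ?_
      have hsmi : s (m + i) = Ti⁻¹ ^ (m + i) * u (m + i) := by
        rw [hs, carlitzLogSeq, ← hTidef, hu]
      have hTii : Ti⁻¹ ^ m = Ti ^ i * Ti⁻¹ ^ (m + i) := by
        rw [pow_add]
        field_simp
        rw [one_div, ← mul_pow, mul_inv_cancel₀ hTi, one_pow]
      rw [hsmi, hcoef, hTii]
      ring
    have hlim : VTendsto v (fun m => ∑ i ∈ b.support, coef i * s (m + i))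
        (∑ i ∈ b.support, coef i * la) := by
      refine aux_vtendsto_sum hv b.support _ _ fun i _ => ?_
      exact aux_vtendsto_const_mul hv (coef i) (aux_vtendsto_shift v hla i)
    rw [show (fun m => ∑ i ∈ b.support, coef i * s (m + i)) =
      carlitzLogSeq ϕ (Polynomial.aeval x (ϕ b)) from funext fun m => (hpt m).symm] at hlim
    have hfin : ∑ i ∈ b.support, coef i * la =
        algebraMap (LaurentSeries Fq) Ksep (Polynomial.aeval (Tvar Fq) b) * la := by
      rw [← Finset.sum_mul]
      congr 1
      have haev : Polynomial.aeval (Tvar Fq) b =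
          ∑ i ∈ b.support, algebraMap Fq (LaurentSeries Fq) (b.coeff i) * Tvar Fq ^ i := by
        rw [Polynomial.aeval_def, Polynomial.eval₂_eq_sum, Polynomial.sum]
      rw [haev, map_sum]
      refine Finset.sum_congr rfl fun i _ => ?_
      rw [map_mul, map_pow, hcoef, hTidef]
    rw [hfin] at hlim
    exact aux_vtendsto_unique hv hlb hlim
end
end
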